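/- arXiv:1506.02247 — 10 statements merged into one kernel-verified Lean document; each statement's English description precedes it below -/
import Mathlib

section
/- Existence for problem P(Ω,u0) with Lipschitz data: there exists a function u : [0,T]×Ω → ℝ such that (i) u(0,x) = u0(x) for all x ∈ Ω, (ii) there are constants M, L' such that for every t ∈ [0,T] the function u(t,·) is bounded by M and Lipschitz with constant L' on Ω, and (iii) for every x ∈ Ω the map t ↦ u(t,x) is differentiable on [0,T] with ∂_t u(t,x) = ∫_Ω K_h(u(t,y) − u(t,x))·(u(t,y) − u(t,x)) dy + λ(u0(x) − u(t,x)). -/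
/-!
Truncating the interaction `ξ ↦ K_h(ξ) ξ` and the reaction term at a level `R` turns the
right-hand side into a bounded, globally Lipschitz vector field on the Banach space of bounded
continuous functions, so Picard–Lindelöf gives a solution on `[0, T]`. The truncated field grows at
most linearly with constants independent of `R`, hence Grönwall bounds the solution by some `M`
independent of `R`, and for `R = 2 M` the truncations are inactive along it. Grönwall applied to
`u(t, x) - u(t, y)` bounds it by a multiple of `|u₀ x - u₀ y|`, which gives the Lipschitz estimate.
The initial datum is first extended from `Ω` to a bounded continuous function on the whole space
(McShane extension followed by truncation).
-/

open MeasureTheory Set BoundedContinuousFunction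
open scoped NNReal

def truncate (R a : ℝ) : ℝ := max (-R) (min a R)

lemma lipschitzWith_truncate (R : ℝ) : LipschitzWith 1 (truncate R) :=
  (LipschitzWith.id.min_const R).const_max (-R)

lemma truncate_of_abs_le {R a : ℝ} (h : |a| ≤ R) : truncate R a = a := by
  rw [abs_le] at h
  rw [truncate, min_eq_left h.2, max_eq_right h.1]

lemma abs_truncate_le (R a : ℝ) : |truncate R a| ≤ |R| :=
  abs_le.2 ⟨(neg_le_neg (le_abs_self R)).trans (le_max_left _ _),
    max_le (neg_le_abs R) ((min_le_right _ _).trans (le_abs_self R))⟩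

lemma abs_truncate_le_abs {R : ℝ} (hR : 0 ≤ R) (a : ℝ) : |truncate R a| ≤ |a| := by
  simpa [truncate_of_abs_le (abs_zero.trans_le hR)] using
    (lipschitzWith_truncate R).dist_le_mul a 0

noncomputable def truncatedInteraction (k : ℝ →ᵇ ℝ) (R : ℝ) : ℝ →ᵇ ℝ :=
  ofNormedAddCommGroup (fun a => k (truncate R a) * truncate R a)
    ((k.continuous.comp (lipschitzWith_truncate R).continuous).mul
      (lipschitzWith_truncate R).continuous)
    (‖k‖ * |R|) fun a => by
      rw [norm_mul]
      exact mul_le_mul (k.norm_coe_le_norm _) (abs_truncate_le R a) (norm_nonneg _) (norm_nonneg _)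

section truncatedInteraction

variable (k : ℝ →ᵇ ℝ) {R : ℝ}

@[simp]
lemma truncatedInteraction_apply (R a : ℝ) :
    truncatedInteraction k R a = k (truncate R a) * truncate R a := rfl

lemma truncatedInteraction_of_abs_le {a : ℝ} (h : |a| ≤ R) :
    truncatedInteraction k R a = k a * a := by
  rw [truncatedInteraction_apply, truncate_of_abs_le h]

lemma abs_truncatedInteraction_le (hR : 0 ≤ R) (a : ℝ) :
    |truncatedInteraction k R a| ≤ ‖k‖ * |a| := by
  rw [truncatedInteraction_apply, abs_mul]
  exact mul_le_mul (k.norm_coe_le_norm _) (abs_truncate_le_abs hR a) (abs_nonneg _) (norm_nonneg _)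

lemma lipschitzWith_truncatedInteraction {Lk : ℝ≥0} (hk : LipschitzWith Lk k) (hR : 0 ≤ R) :
    LipschitzWith (‖k‖₊ + Lk * R.toNNReal) (truncatedInteraction k R) := by
  refine LipschitzWith.of_dist_le_mul fun a b => ?_
  set p := truncate R a
  set q := truncate R b
  have hpq : |p - q| ≤ |a - b| := by
    simpa [Real.dist_eq] using (lipschitzWith_truncate R).dist_le_mul a b
  have hq : |q| ≤ R := (abs_truncate_le R b).trans (abs_of_nonneg hR).le
  have hk' : |k p - k q| ≤ Lk * |p - q| := by
    simpa [Real.dist_eq] using hk.dist_le_mul p q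
  simp only [Real.dist_eq, truncatedInteraction_apply, NNReal.coe_add, NNReal.coe_mul,
    coe_nnnorm, Real.coe_toNNReal _ hR]
  calc |k p * p - k q * q| = |k p * (p - q) + (k p - k q) * q| := by congr 1; ring
    _ ≤ ‖k‖ * |a - b| + Lk * |a - b| * R := by
      refine (abs_add_le _ _).trans (add_le_add ?_ ?_) <;> rw [abs_mul]
      · exact mul_le_mul (k.norm_coe_le_norm _) hpq (abs_nonneg _) (norm_nonneg _)
      · exact mul_le_mul (hk'.trans (by gcongr)) hq (abs_nonneg _) (by positivity)
    _ = (‖k‖ + Lk * R) * |a - b| := by ring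

end truncatedInteraction

section nonlocalOp

variable {X : Type*} [TopologicalSpace X] [MeasurableSpace X] [OpensMeasurableSpace X]
  (μ : Measure X) [IsFiniteMeasure μ] (φ : ℝ →ᵇ ℝ)

lemma integrable_comp_sub_const (v : X →ᵇ ℝ) (c : ℝ) : Integrable (fun z => φ (v z - c)) μ :=
  (integrable_const ‖φ‖).mono'
    (φ.continuous.comp (v.continuous.sub continuous_const)).aestronglyMeasurable
    (ae_of_all _ fun _ => φ.norm_coe_le_norm _)

noncomputable def nonlocalOp (v : X →ᵇ ℝ) : X →ᵇ ℝ :=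
  ofNormedAddCommGroup (fun x => ∫ z, φ (v z - v x) ∂μ)
    ((continuous_of_dominated (fun c => (integrable_comp_sub_const μ φ v c).aestronglyMeasurable)
      (fun _ => ae_of_all _ fun _ => φ.norm_coe_le_norm _) (integrable_const ‖φ‖)
      (ae_of_all _ fun _ => φ.continuous.comp (continuous_const.sub continuous_id))).comp
      v.continuous)
    (‖φ‖ * μ.real univ)
    fun _ => norm_integral_le_of_norm_le_const (ae_of_all _ fun _ => φ.norm_coe_le_norm _)

@[simp]
lemma nonlocalOp_apply (v : X →ᵇ ℝ) (x : X) :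
    nonlocalOp μ φ v x = ∫ z, φ (v z - v x) ∂μ := rfl

variable {μ φ}

lemma abs_integral_comp_sub_sub_le {Lφ : ℝ≥0} (hφ : LipschitzWith Lφ φ) (v w : X →ᵇ ℝ)
    (c c' : ℝ) :
    |∫ z, φ (v z - c) ∂μ - ∫ z, φ (w z - c') ∂μ| ≤ Lφ * (dist v w + |c - c'|) * μ.real univ := by
  rw [← integral_sub (integrable_comp_sub_const μ φ v c) (integrable_comp_sub_const μ φ w c'),
    ← Real.norm_eq_abs]
  refine norm_integral_le_of_norm_le_const (ae_of_all _ fun z => ?_)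
  calc ‖φ (v z - c) - φ (w z - c')‖ ≤ Lφ * |v z - c - (w z - c')| := by
        simpa only [Real.dist_eq, Real.norm_eq_abs] using hφ.dist_le_mul (v z - c) (w z - c')
    _ ≤ Lφ * (dist v w + |c - c'|) := by
        gcongr
        calc |v z - c - (w z - c')| = |(v z - w z) - (c - c')| := by congr 1; ring
          _ ≤ |v z - w z| + |c - c'| := abs_sub _ _
          _ ≤ dist v w + |c - c'| := by
            gcongr; simpa [Real.dist_eq] using dist_coe_le_dist (f := v) (g := w) z

lemma lipschitzWith_nonlocalOp {Lφ : ℝ≥0} (hφ : LipschitzWith Lφ φ) :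
    LipschitzWith (2 * Lφ * (μ univ).toNNReal) (nonlocalOp μ φ) := by
  refine LipschitzWith.of_dist_le_mul fun v w => (dist_le (by positivity)).2 fun x => ?_
  have hvw : |v x - w x| ≤ dist v w := by
    simpa [Real.dist_eq] using dist_coe_le_dist (f := v) (g := w) x
  calc dist (nonlocalOp μ φ v x) (nonlocalOp μ φ w x)
      ≤ Lφ * (dist v w + |v x - w x|) * μ.real univ := abs_integral_comp_sub_sub_le hφ v w _ _
    _ ≤ Lφ * (dist v w + dist v w) * μ.real univ := by gcongr
    _ = _ := by
      rw [NNReal.coe_mul, ENNReal.coe_toNNReal_eq_toReal, measureReal_def]; push_cast; ring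

lemma abs_nonlocalOp_sub_le {Lφ : ℝ≥0} (hφ : LipschitzWith Lφ φ) (v : X →ᵇ ℝ) (x y : X) :
    |nonlocalOp μ φ v x - nonlocalOp μ φ v y| ≤ Lφ * μ.real univ * |v x - v y| := by
  simpa only [dist_self, zero_add, nonlocalOp_apply, mul_right_comm] using
    abs_integral_comp_sub_sub_le (μ := μ) hφ v v (v x) (v y)

lemma norm_nonlocalOp_le {B : ℝ} (hB : ∀ a, |φ a| ≤ B * |a|) (v : X →ᵇ ℝ) :
    ‖nonlocalOp μ φ v‖ ≤ 2 * B * μ.real univ * ‖v‖ := by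
  have hB0 : 0 ≤ B := by simpa using (abs_nonneg _).trans (hB 1)
  refine (norm_le (by positivity)).2 fun x => (norm_integral_le_of_norm_le_const
    (ae_of_all _ fun z => ?_)).trans_eq (mul_right_comm _ _ _)
  calc ‖φ (v z - v x)‖ ≤ B * |v z - v x| := hB _
    _ ≤ B * (‖v‖ + ‖v‖) := by
      gcongr
      exact (abs_sub _ _).trans (add_le_add (v.norm_coe_le_norm z) (v.norm_coe_le_norm x))
    _ = 2 * B * ‖v‖ := by ring

end nonlocalOp

lemma gronwallBound_mul (c δ K ε x : ℝ) :
    gronwallBound (c * δ) K (c * ε) x = c * gronwallBound δ K ε x := by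
  by_cases hK : K = 0
  · simp only [hK, gronwallBound_K0]; ring
  · simp only [gronwallBound_of_K_ne_0 hK]; ring

lemma self_le_gronwallBound {δ K ε x : ℝ} (hδ : 0 ≤ δ) (hε : 0 ≤ ε) (hK : 0 ≤ K) (hx : 0 ≤ x) :
    δ ≤ gronwallBound δ K ε x :=
  (gronwallBound_x0 δ K ε).symm.trans_le (gronwallBound_mono hδ hε hK hx)

section ODE

variable {E : Type*} [NormedAddCommGroup E] [NormedSpace ℝ E]

lemma exists_hasDerivWithinAt_Icc_of_lipschitzWith [CompleteSpace E] {F : E → E} {L : ℝ≥0}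
    (hF : LipschitzWith L F) {C : ℝ} (hC : ∀ v, ‖F v‖ ≤ C) (x₀ : E) {T : ℝ} (hT : 0 ≤ T) :
    ∃ α : ℝ → E, α 0 = x₀ ∧ ∀ t ∈ Icc 0 T, HasDerivWithinAt α (F (α t)) (Icc 0 T) t := by
  have hC0 : 0 ≤ C := (norm_nonneg _).trans (hC x₀)
  have hPL : IsPicardLindelof (fun _ => F) (tmin := 0) (tmax := T) ⟨0, left_mem_Icc.2 hT⟩ x₀
      (C * T).toNNReal 0 C.toNNReal L :=
    .of_time_independent (fun v _ => (hC v).trans_eq (Real.coe_toNNReal _ hC0).symm)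
      hF.lipschitzOnWith
      (by simp [Real.coe_toNNReal _ hC0, Real.coe_toNNReal _ (mul_nonneg hC0 hT), hT])
  exact hPL.exists_eq_forall_mem_Icc_hasDerivWithinAt₀

lemma norm_le_gronwallBound_of_hasDerivWithinAt_Icc {f f' : ℝ → E} {δ K ε T : ℝ}
    (hf : ∀ t ∈ Icc 0 T, HasDerivWithinAt f (f' t) (Icc 0 T) t) (h0 : ‖f 0‖ ≤ δ)
    (bound : ∀ t ∈ Icc 0 T, ‖f' t‖ ≤ K * ‖f t‖ + ε) :
    ∀ t ∈ Icc 0 T, ‖f t‖ ≤ gronwallBound δ K ε t := by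
  simpa using norm_le_gronwallBound_of_norm_deriv_right_le
    (fun t ht => (hf t ht).continuousWithinAt)
    (fun t ht => (hf t (Ico_subset_Icc_self ht)).mono_of_mem_nhdsWithin (Icc_mem_nhdsGE_of_mem ht))
    h0 fun t ht => bound t (Ico_subset_Icc_self ht)

end ODE

lemma HasDerivWithinAt.apply_boundedContinuousFunction {X : Type*} [TopologicalSpace X]
    {u : ℝ → X →ᵇ ℝ} {u' : X →ᵇ ℝ} {s : Set ℝ} {t : ℝ} (hu : HasDerivWithinAt u u' s t) (x : X) :
    HasDerivWithinAt (fun τ => u τ x) (u' x) s t :=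
  ((evalCLM ℝ x : (X →ᵇ ℝ) →L[ℝ] ℝ).hasFDerivAt.comp_hasDerivWithinAt t hu :)

section nonlocalField

variable {X : Type*} [TopologicalSpace X] [MeasurableSpace X] [OpensMeasurableSpace X]
  (μ : Measure X) [IsFiniteMeasure μ] (k : ℝ →ᵇ ℝ) (lam : ℝ) (U₀ : X →ᵇ ℝ) (R : ℝ)

noncomputable def nonlocalField (v : X →ᵇ ℝ) : X →ᵇ ℝ :=
  nonlocalOp μ (truncatedInteraction k R) v +
    lam • (U₀ - v.comp (truncate R) (lipschitzWith_truncate R))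

lemma nonlocalField_apply (v : X →ᵇ ℝ) (x : X) :
    nonlocalField μ k lam U₀ R v x =
      nonlocalOp μ (truncatedInteraction k R) v x + lam * (U₀ x - truncate R (v x)) := rfl

lemma nonlocalField_apply_of_two_mul_norm_le {v : X →ᵇ ℝ} (hv : 2 * ‖v‖ ≤ R) (x : X) :
    nonlocalField μ k lam U₀ R v x =
      ∫ z, k (v z - v x) * (v z - v x) ∂μ + lam * (U₀ x - v x) := by
  have hvR : ∀ z, |v z| ≤ R / 2 := fun z => by
    have := v.norm_coe_le_norm z; rw [Real.norm_eq_abs] at this; linarith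
  have hdiff : ∀ z, |v z - v x| ≤ R := fun z => by
    linarith [abs_sub (v z) (v x), hvR z, hvR x]
  have hx : |v x| ≤ R := by linarith [hvR x, abs_nonneg (v x)]
  rw [nonlocalField_apply, nonlocalOp_apply, truncate_of_abs_le hx]
  simp only [truncatedInteraction_of_abs_le _ (hdiff _)]

variable {k lam}

lemma exists_lipschitzWith_nonlocalField {Lk : ℝ≥0} (hk : LipschitzWith Lk k) (hR : 0 ≤ R) :
    ∃ L, LipschitzWith L (nonlocalField μ k lam U₀ R) :=
  ⟨_, (lipschitzWith_nonlocalOp (lipschitzWith_truncatedInteraction k hk hR)).add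
    ((lipschitzWith_smul lam).comp ((LipschitzWith.const U₀).sub (lipschitz_comp _)))⟩

lemma exists_norm_nonlocalField_le : ∃ C, ∀ v, ‖nonlocalField μ k lam U₀ R v‖ ≤ C := by
  refine ⟨‖truncatedInteraction k R‖ * μ.real univ + ‖lam‖ * (‖U₀‖ + |R|), fun v => ?_⟩
  refine (norm_add_le _ _).trans (add_le_add
    (norm_ofNormedAddCommGroup_le _ (mul_nonneg (norm_nonneg _) measureReal_nonneg) _) ?_)
  rw [norm_smul]
  gcongr
  exact (norm_sub_le _ _).trans (add_le_add_right ((norm_le (abs_nonneg R)).2 fun x =>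
    abs_truncate_le R (v x)) _)

variable (hlam : 0 ≤ lam) {R} (hR : 0 ≤ R)
include hlam hR

lemma norm_nonlocalField_le (v : X →ᵇ ℝ) :
    ‖nonlocalField μ k lam U₀ R v‖ ≤ (2 * ‖k‖ * μ.real univ + lam) * ‖v‖ + lam * ‖U₀‖ := by
  refine (norm_le (by positivity)).2 fun x => ?_
  rw [nonlocalField_apply, Real.norm_eq_abs]
  have hv : |truncate R (v x)| ≤ ‖v‖ := (abs_truncate_le_abs hR _).trans (v.norm_coe_le_norm x)
  have hU : |U₀ x| ≤ ‖U₀‖ := U₀.norm_coe_le_norm x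
  calc _ ≤ ‖nonlocalOp μ (truncatedInteraction k R) v x‖ + lam * (|U₀ x| + |truncate R (v x)|) := by
        refine (abs_add_le _ _).trans (add_le_add le_rfl ?_)
        rw [abs_mul, abs_of_nonneg hlam]
        exact mul_le_mul_of_nonneg_left (abs_sub _ _) hlam
    _ ≤ 2 * ‖k‖ * μ.real univ * ‖v‖ + lam * (‖U₀‖ + ‖v‖) := by
        gcongr
        exact (norm_coe_le_norm _ x).trans
          (norm_nonlocalOp_le (abs_truncatedInteraction_le k hR) v)
    _ = _ := by ring

lemma abs_nonlocalField_sub_le {Lk : ℝ≥0} (hk : LipschitzWith Lk k) (v : X →ᵇ ℝ) (x y : X) :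
    |nonlocalField μ k lam U₀ R v x - nonlocalField μ k lam U₀ R v y| ≤
      ((‖k‖ + Lk * R) * μ.real univ + lam) * |v x - v y| + lam * |U₀ x - U₀ y| := by
  have hint := abs_nonlocalOp_sub_le (μ := μ) (lipschitzWith_truncatedInteraction k hk hR) v x y
  have htr : |truncate R (v x) - truncate R (v y)| ≤ |v x - v y| := by
    simpa [Real.dist_eq] using (lipschitzWith_truncate R).dist_le_mul (v x) (v y)
  simp only [NNReal.coe_add, NNReal.coe_mul, coe_nnnorm, Real.coe_toNNReal _ hR] at hint
  rw [nonlocalField_apply, nonlocalField_apply]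
  calc _ = |(nonlocalOp μ (truncatedInteraction k R) v x -
            nonlocalOp μ (truncatedInteraction k R) v y)
          + lam * ((U₀ x - U₀ y) - (truncate R (v x) - truncate R (v y)))| := by
        congr 1; ring
    _ ≤ (‖k‖ + Lk * R) * μ.real univ * |v x - v y| + lam * (|U₀ x - U₀ y| + |v x - v y|) := by
        refine (abs_add_le _ _).trans (add_le_add hint ?_)
        rw [abs_mul, abs_of_nonneg hlam]
        exact mul_le_mul_of_nonneg_left ((abs_sub _ _).trans (add_le_add le_rfl htr)) hlam
    _ = _ := by ring

end nonlocalField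

section solution

variable {X : Type*} [TopologicalSpace X] [MeasurableSpace X] [OpensMeasurableSpace X]
  {μ : Measure X} [IsFiniteMeasure μ] {k : ℝ →ᵇ ℝ} {lam R T : ℝ} {U₀ : X →ᵇ ℝ}
  {u : ℝ → X →ᵇ ℝ}

lemma norm_le_of_hasDerivWithinAt_nonlocalField (hlam : 0 ≤ lam) (hR : 0 ≤ R) (hu₀ : u 0 = U₀)
    (hu : ∀ t ∈ Icc 0 T, HasDerivWithinAt u (nonlocalField μ k lam U₀ R (u t)) (Icc 0 T) t)
    {t : ℝ} (ht : t ∈ Icc 0 T) :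
    ‖u t‖ ≤ ‖U₀‖ * gronwallBound 1 (2 * ‖k‖ * μ.real univ + lam) lam T := by
  have hK : 0 ≤ 2 * ‖k‖ * μ.real univ + lam := by positivity
  calc ‖u t‖ ≤ gronwallBound (‖U₀‖ * 1) (2 * ‖k‖ * μ.real univ + lam) (‖U₀‖ * lam) t := by
        refine norm_le_gronwallBound_of_hasDerivWithinAt_Icc hu (by rw [hu₀, mul_one])
          (fun τ _ => (norm_nonlocalField_le μ U₀ hlam hR _).trans_eq (by ring)) t ht
    _ ≤ ‖U₀‖ * gronwallBound 1 (2 * ‖k‖ * μ.real univ + lam) lam T := by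
        rw [gronwallBound_mul]
        exact mul_le_mul_of_nonneg_left (gronwallBound_mono zero_le_one hlam hK ht.2)
          (norm_nonneg _)

lemma abs_sub_le_of_hasDerivWithinAt_nonlocalField {Lk : ℝ≥0} (hk : LipschitzWith Lk k)
    (hlam : 0 ≤ lam) (hR : 0 ≤ R) (hu₀ : u 0 = U₀)
    (hu : ∀ t ∈ Icc 0 T, HasDerivWithinAt u (nonlocalField μ k lam U₀ R (u t)) (Icc 0 T) t)
    {t : ℝ} (ht : t ∈ Icc 0 T) (x y : X) :
    |u t x - u t y| ≤
      gronwallBound 1 ((‖k‖ + Lk * R) * μ.real univ + lam) lam T * |U₀ x - U₀ y| := by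
  set K := (‖k‖ + Lk * R) * μ.real univ + lam
  have hK : 0 ≤ K := by positivity
  have hdiff : ∀ τ ∈ Icc 0 T, HasDerivWithinAt (fun τ => u τ x - u τ y)
      (nonlocalField μ k lam U₀ R (u τ) x - nonlocalField μ k lam U₀ R (u τ) y) (Icc 0 T) τ :=
    fun τ hτ => ((hu τ hτ).apply_boundedContinuousFunction x).sub
      ((hu τ hτ).apply_boundedContinuousFunction y)
  calc |u t x - u t y| ≤ gronwallBound (|U₀ x - U₀ y| * 1) K (|U₀ x - U₀ y| * lam) t := by
        refine norm_le_gronwallBound_of_hasDerivWithinAt_Icc hdiff (by simp [hu₀])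
          (fun τ _ => (abs_nonlocalField_sub_le μ U₀ hlam hR hk _ x y).trans_eq
            (by rw [Real.norm_eq_abs]; ring)) t ht
    _ ≤ gronwallBound 1 K lam T * |U₀ x - U₀ y| := by
        rw [gronwallBound_mul, mul_comm]
        exact mul_le_mul_of_nonneg_right (gronwallBound_mono zero_le_one hlam hK ht.2)
          (abs_nonneg _)

end solution

theorem exists_nonlocal_solution {X : Type*} [TopologicalSpace X] [MeasurableSpace X]
    [OpensMeasurableSpace X] (μ : Measure X) [IsFiniteMeasure μ] (k : ℝ →ᵇ ℝ) {Lk : ℝ≥0}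
    (hk : LipschitzWith Lk k) {lam : ℝ} (hlam : 0 ≤ lam) {T : ℝ} (hT : 0 ≤ T) (U₀ : X →ᵇ ℝ) :
    ∃ u : ℝ → X →ᵇ ℝ, u 0 = U₀ ∧ (∃ M, ∀ t ∈ Icc 0 T, ‖u t‖ ≤ M) ∧
      (∃ L ≥ 0, ∀ t ∈ Icc 0 T, ∀ x y, |u t x - u t y| ≤ L * |U₀ x - U₀ y|) ∧
      ∀ x, ∀ t ∈ Icc 0 T, HasDerivWithinAt (fun τ => u τ x)
        (∫ z, k (u t z - u t x) * (u t z - u t x) ∂μ + lam * (U₀ x - u t x)) (Icc 0 T) t := by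
  have hG : ∀ K ≥ 0, 0 ≤ gronwallBound 1 K lam T := fun K hK =>
    zero_le_one.trans (self_le_gronwallBound zero_le_one hlam hK hT)
  set M := ‖U₀‖ * gronwallBound 1 (2 * ‖k‖ * μ.real univ + lam) lam T
  have hM : 0 ≤ M := mul_nonneg (norm_nonneg _) (hG _ (by positivity))
  obtain ⟨L, hL⟩ := exists_lipschitzWith_nonlocalField μ U₀ (lam := lam) (2 * M) hk (by positivity)
  obtain ⟨C, hC⟩ := exists_norm_nonlocalField_le μ (k := k) (lam := lam) U₀ (2 * M)
  obtain ⟨u, hu₀, hu⟩ := exists_hasDerivWithinAt_Icc_of_lipschitzWith hL hC U₀ hT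
  have hbound : ∀ t ∈ Icc 0 T, ‖u t‖ ≤ M := fun t ht =>
    norm_le_of_hasDerivWithinAt_nonlocalField hlam (by positivity) hu₀ hu ht
  refine ⟨u, hu₀, ⟨M, hbound⟩, ⟨_, hG _ (by positivity), fun t ht =>
    abs_sub_le_of_hasDerivWithinAt_nonlocalField hk hlam (by positivity) hu₀ hu ht⟩,
    fun x t ht => ?_⟩
  rw [← nonlocalField_apply_of_two_mul_norm_le μ k lam U₀ (v := u t) (R := 2 * M)
    (by linarith [hbound t ht])]
  exact (hu t ht).apply_boundedContinuousFunction x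

lemma LipschitzOnWith.exists_boundedContinuousFunction_eqOn {X : Type*} [PseudoMetricSpace X]
    {f : X → ℝ} {s : Set X} {L : ℝ≥0} (hf : LipschitzOnWith L f s) {M : ℝ}
    (hM : ∀ x ∈ s, |f x| ≤ M) : ∃ F : X →ᵇ ℝ, EqOn F f s := by
  obtain ⟨g, hg, hfg⟩ := hf.extend_real
  refine ⟨ofNormedAddCommGroup (truncate M ∘ g) ((lipschitzWith_truncate M).continuous.comp
    hg.continuous) |M| fun x => abs_truncate_le M (g x), fun x hx => ?_⟩
  change truncate M (g x) = f x
  rw [← hfg hx]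
  exact truncate_of_abs_le (hM x hx)

theorem stmt_0_general
    (d : ℕ)
    (Ω : Set (Fin d → ℝ)) (hΩbdd : Bornology.IsBounded Ω)
    (K : ℝ → ℝ) (hKnonneg : ∀ ξ, 0 ≤ K ξ) (BK : ℝ) (hKbdd : ∀ ξ, K ξ ≤ BK)
    (LK : NNReal) (hKlip : LipschitzWith LK K)
    (h : ℝ) (lam : ℝ) (hlam : 0 ≤ lam) (T : ℝ) (hT : 0 < T)
    (u0 : (Fin d → ℝ) → ℝ) (M0 : ℝ) (hu0bdd : ∀ x ∈ Ω, |u0 x| ≤ M0)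
    (L0 : NNReal) (hu0lip : LipschitzOnWith L0 u0 Ω) :
    ∃ u : ℝ → (Fin d → ℝ) → ℝ,
      (∀ x ∈ Ω, u 0 x = u0 x) ∧
      (∃ M L' : ℝ, ∀ t ∈ Icc (0:ℝ) T,
        (∀ x ∈ Ω, |u t x| ≤ M) ∧
        (∀ x ∈ Ω, ∀ y ∈ Ω, |u t x - u t y| ≤ L' * dist x y)) ∧
      (∀ x ∈ Ω, ∀ t ∈ Icc (0:ℝ) T,
        HasDerivWithinAt (fun τ => u τ x)
          ((∫ y in Ω, K ((u t y - u t x) / h) * (u t y - u t x)) +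
            lam * (u0 x - u t x)) (Icc 0 T) t) := by
  have : IsFiniteMeasure (volume.restrict Ω) := isFiniteMeasure_restrict.2 hΩbdd.measure_lt_top.ne
  let Kh : ℝ →ᵇ ℝ := ofNormedAddCommGroup (fun ξ => K (ξ / h))
    (hKlip.continuous.comp (continuous_id.div_const h)) BK fun ξ => by
      rw [Real.norm_eq_abs, abs_of_nonneg (hKnonneg _)]; exact hKbdd _
  have hKh : LipschitzWith (LK * ‖h⁻¹‖₊) Kh := by
    have hKh_eq : (Kh : ℝ → ℝ) = K ∘ (h⁻¹ • ·) := funext fun ξ => congrArg K (div_eq_inv_mul ξ h)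
    rw [hKh_eq]
    exact hKlip.comp (lipschitzWith_smul h⁻¹)
  obtain ⟨U₀, hU₀⟩ := hu0lip.exists_boundedContinuousFunction_eqOn hu0bdd
  obtain ⟨u, hu₀, ⟨M, hM⟩, ⟨L, hL, hLip⟩, hderiv⟩ :=
    exists_nonlocal_solution (volume.restrict Ω) Kh hKh hlam hT.le U₀
  refine ⟨fun t x => u t x, fun x hx => by simp [hu₀, hU₀ hx], ⟨M, L * L0, fun t ht =>
    ⟨fun x _ => (u t).norm_coe_le_norm x |>.trans (hM t ht), fun x hx y hy => ?_⟩⟩,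
    fun x hx t ht => hU₀ hx ▸ hderiv x t ht⟩
  calc |u t x - u t y| ≤ L * |U₀ x - U₀ y| := hLip t ht x y
    _ ≤ L * (L0 * dist x y) := by
        rw [hU₀ hx, hU₀ hy, ← Real.dist_eq]
        exact mul_le_mul_of_nonneg_left (hu0lip.dist_le_mul x hx y hy) hL
    _ = L * L0 * dist x y := by ring

/-- Existence for problem P(Ω,u0) with Lipschitz data: there is a function
`u : [0,T]×Ω → ℝ` with `u(0,·) = u0`, uniformly bounded and Lipschitz in space,
solving `∂_t u(t,x) = ∫_Ω K_h(u(t,y)−u(t,x))(u(t,y)−u(t,x)) dy + λ(u0(x)−u(t,x))`. -/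
theorem stmt_0
    (d : ℕ) (hd : 1 ≤ d)
    (Ω : Set (Fin d → ℝ)) (hΩopen : IsOpen Ω) (hΩbdd : Bornology.IsBounded Ω)
    (K : ℝ → ℝ) (hKnonneg : ∀ ξ, 0 ≤ K ξ) (BK : ℝ) (hKbdd : ∀ ξ, K ξ ≤ BK)
    (LK : NNReal) (hKlip : LipschitzWith LK K)
    (h : ℝ) (hh : 0 < h) (lam : ℝ) (hlam : 0 ≤ lam) (T : ℝ) (hT : 0 < T)
    (u0 : (Fin d → ℝ) → ℝ) (M0 : ℝ) (hu0bdd : ∀ x ∈ Ω, |u0 x| ≤ M0)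
    (L0 : NNReal) (hu0lip : LipschitzOnWith L0 u0 Ω) :
    ∃ u : ℝ → (Fin d → ℝ) → ℝ,
      (∀ x ∈ Ω, u 0 x = u0 x) ∧
      (∃ M L' : ℝ, ∀ t ∈ Icc (0:ℝ) T,
        (∀ x ∈ Ω, |u t x| ≤ M) ∧
        (∀ x ∈ Ω, ∀ y ∈ Ω, |u t x - u t y| ≤ L' * dist x y)) ∧
      (∀ x ∈ Ω, ∀ t ∈ Icc (0:ℝ) T,
        HasDerivWithinAt (fun τ => u τ x)
          ((∫ y in Ω, K ((u t y - u t x) / h) * (u t y - u t x)) +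
            lam * (u0 x - u t x)) (Icc 0 T) t) :=
  stmt_0_general d Ω hΩbdd K hKnonneg BK hKbdd LK hKlip h lam hlam T hT u0 M0 hu0bdd L0 hu0lip
end

section
/- Uniqueness for problem P(Ω,u0): if u1 and u2 are two solutions of problem P(Ω,u0) on [0,T] with the same initial datum u0, then u1(t,x) = u2(t,x) for all t ∈ [0,T] and almost every x ∈ Ω. -/
/-! Write `w = u₁ - u₂`. The right-hand side of the equation is Lipschitz in the sup norm
on bounded sets of functions, with some constant `L`, so `|∂ₜ w(t,x)| ≤ L · sup_y |w(t,y)|`.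
Starting from `|w| ≤ A` and integrating in time repeatedly gives
`|w(t,x)| ≤ A (L t)ⁿ / n!` for every `n`, hence `w = 0`. -/

open MeasureTheory Set

/-- `u : [0,T]×Ω → ℝ` is a solution of problem P(Ω,u0): `u(t,·)` is measurable and
bounded uniformly in `t ∈ [0,T]`, `u(0,·) = u0` on `Ω`, and for every `(t,x)` the map
`t ↦ u(t,x)` is differentiable with
`∂_t u(t,x) = ∫_Ω K_h(u(t,y)−u(t,x))(u(t,y)−u(t,x)) dy + λ(u0(x)−u(t,x))`. -/
def IsSolution (d : ℕ) (Ω : Set (Fin d → ℝ)) (K : ℝ → ℝ) (h lam T : ℝ)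
    (u0 : (Fin d → ℝ) → ℝ) (u : ℝ → (Fin d → ℝ) → ℝ) : Prop :=
  (∀ t ∈ Set.Icc (0:ℝ) T, Measurable (u t)) ∧
  (∃ M : ℝ, ∀ t ∈ Set.Icc (0:ℝ) T, ∀ x ∈ Ω, |u t x| ≤ M) ∧
  (∀ x ∈ Ω, u 0 x = u0 x) ∧
  (∀ t ∈ Set.Icc (0:ℝ) T, ∀ x ∈ Ω,
    HasDerivWithinAt (fun τ => u τ x)
      ((∫ y in Ω, K ((u t y - u t x) / h) * (u t y - u t x)) + lam * (u0 x - u t x))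
      (Set.Icc 0 T) t)

open Filter Topology
open scoped NNReal Nat

section PicardIteration

lemma abs_le_of_hasDerivWithinAt_Icc {f f' B B' : ℝ → ℝ} {a b : ℝ}
    (hf : ∀ s ∈ Icc a b, HasDerivWithinAt f (f' s) (Icc a b) s)
    (hB : ∀ s, HasDerivAt B (B' s) s) (ha : |f a| ≤ B a)
    (bound : ∀ s ∈ Icc a b, |f' s| ≤ B' s) :
    ∀ s ∈ Icc a b, |f s| ≤ B s := fun _ hs =>
  image_norm_le_of_norm_deriv_right_le_deriv_boundary
    (fun s hs => (hf s hs).continuousWithinAt)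
    (fun s hs => (hf s (Ico_subset_Icc_self hs)).mono_of_mem_nhdsWithin
      (Icc_mem_nhdsGE_of_mem hs))
    ha hB (fun s hs => bound s (Ico_subset_Icc_self hs)) hs

lemma hasDerivAt_mul_pow_succ_div_factorial (A L : ℝ) (n : ℕ) (s : ℝ) :
    HasDerivAt (fun s => A * (L * s) ^ (n + 1) / (n + 1)!) (L * (A * (L * s) ^ n / n !)) s := by
  refine ((((hasDerivAt_id' s).const_mul L).fun_pow (n + 1)).const_mul A
    |>.div_const ((n + 1)! : ℝ)).congr_deriv ?_
  rw [Nat.factorial_succ]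
  push_cast
  field_simp

variable {α : Type*} {S : Set α} {w w' : ℝ → α → ℝ} {T A L : ℝ}

lemma abs_le_mul_pow_div_factorial (h0 : ∀ x ∈ S, w 0 x = 0)
    (hw : ∀ t ∈ Icc 0 T, ∀ x ∈ S, HasDerivWithinAt (w · x) (w' t x) (Icc 0 T) t)
    (hA : ∀ t ∈ Icc 0 T, ∀ x ∈ S, |w t x| ≤ A)
    (hw' : ∀ t ∈ Icc 0 T, ∀ b, (∀ y ∈ S, |w t y| ≤ b) → ∀ x ∈ S, |w' t x| ≤ L * b)
    (n : ℕ) : ∀ t ∈ Icc 0 T, ∀ x ∈ S, |w t x| ≤ A * (L * t) ^ n / n ! := by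
  induction n with
  | zero => simpa using hA
  | succ n ih =>
    intro t ht x hx
    refine abs_le_of_hasDerivWithinAt_Icc (fun s hs => hw s hs x hx)
      (hasDerivAt_mul_pow_succ_div_factorial A L n) ?_
      (fun s hs => hw' s hs _ (ih s hs) x hx) t ht
    simp [h0 x hx]

lemma eq_zero_of_abs_deriv_le_mul_bound (h0 : ∀ x ∈ S, w 0 x = 0)
    (hw : ∀ t ∈ Icc 0 T, ∀ x ∈ S, HasDerivWithinAt (w · x) (w' t x) (Icc 0 T) t)
    (hA : ∀ t ∈ Icc 0 T, ∀ x ∈ S, |w t x| ≤ A)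
    (hw' : ∀ t ∈ Icc 0 T, ∀ b, (∀ y ∈ S, |w t y| ≤ b) → ∀ x ∈ S, |w' t x| ≤ L * b) :
    ∀ t ∈ Icc 0 T, ∀ x ∈ S, w t x = 0 := by
  intro t ht x hx
  have hlim : Tendsto (fun n : ℕ => A * (L * t) ^ n / n !) atTop (𝓝 0) := by
    simpa [mul_div_assoc] using
      (FloorSemiring.tendsto_pow_div_factorial_atTop (L * t)).const_mul A
  exact abs_nonpos_iff.mp <|
    ge_of_tendsto' hlim fun n => abs_le_mul_pow_div_factorial h0 hw hA hw' n t ht x hx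

end PicardIteration

section NonlocalRHS

lemma LipschitzWith.abs_mul_self_sub_mul_self_le {k : ℝ → ℝ} {Lk : ℝ≥0} (hk : LipschitzWith Lk k)
    {R a b : ℝ} (ha : |a| ≤ R) (hb : |b| ≤ R) :
    |k a * a - k b * b| ≤ (|k 0| + 2 * Lk * R) * |a - b| := by
  have hka : |k a| ≤ |k 0| + Lk * R := by
    have hk0 : |k a - k 0| ≤ Lk * |a| := by simpa [Real.dist_eq] using hk.dist_le_mul a 0
    linarith [abs_sub_abs_le_abs_sub (k a) (k 0), mul_le_mul_of_nonneg_left ha Lk.coe_nonneg]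
  have hkab : |k a - k b| ≤ Lk * |a - b| := by
    simpa only [Real.dist_eq] using hk.dist_le_mul a b
  calc |k a * a - k b * b| = |k a * (a - b) + (k a - k b) * b| := by
        congr 1; ring
    _ ≤ |k a| * |a - b| + |k a - k b| * |b| := by
        simpa only [abs_mul] using abs_add_le (k a * (a - b)) ((k a - k b) * b)
    _ ≤ (|k 0| + Lk * R) * |a - b| + Lk * |a - b| * R := by gcongr
    _ = (|k 0| + 2 * Lk * R) * |a - b| := by ring

variable {α : Type*} [MeasurableSpace α] {μ : Measure α} {Ω : Set α}
  {k : ℝ → ℝ} {Lk : ℝ≥0} {M : ℝ}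

/-- Here `k` stands for the rescaled kernel `K_h = K(· / h)`. -/
noncomputable def nonlocalRHS (μ : Measure α) (Ω : Set α) (k : ℝ → ℝ) (lam : ℝ)
    (u0 v : α → ℝ) (x : α) : ℝ :=
  (∫ y in Ω, k (v y - v x) * (v y - v x) ∂μ) + lam * (u0 x - v x)

lemma integrableOn_mul_self_comp_sub (hΩ : MeasurableSet Ω) (hμΩ : μ Ω ≠ ⊤)
    (hk : LipschitzWith Lk k) {v : α → ℝ} (hv : Measurable v) (hvM : ∀ y ∈ Ω, |v y| ≤ M)
    {c : ℝ} (hc : |c| ≤ M) :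
    IntegrableOn (fun y => k (v y - c) * (v y - c)) Ω μ := by
  refine Measure.integrableOn_of_bounded (M := (|k 0| + 2 * Lk * (2 * M)) * (2 * M)) hμΩ
    ((hk.continuous.measurable.comp (hv.sub_const c)).mul (hv.sub_const c)).aestronglyMeasurable
    ?_
  filter_upwards [ae_restrict_mem hΩ] with y hy
  have hvc : |v y - c| ≤ 2 * M := by linarith [abs_sub (v y) c, hvM y hy]
  have hM : 0 ≤ 2 * M := (abs_nonneg _).trans hvc
  simpa using (hk.abs_mul_self_sub_mul_self_le hvc (abs_zero.trans_le hM)).trans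
    (mul_le_mul_of_nonneg_left (by simpa using hvc) (by positivity))

lemma abs_nonlocalRHS_sub_le (hΩ : MeasurableSet Ω) (hμΩ : μ Ω ≠ ⊤)
    (hk : LipschitzWith Lk k) (lam : ℝ) (u0 : α → ℝ) {v₁ v₂ : α → ℝ}
    (hv₁ : Measurable v₁) (hv₂ : Measurable v₂)
    (hv₁M : ∀ y ∈ Ω, |v₁ y| ≤ M) (hv₂M : ∀ y ∈ Ω, |v₂ y| ≤ M)
    {b : ℝ} (hb : ∀ y ∈ Ω, |v₁ y - v₂ y| ≤ b) {x : α} (hx : x ∈ Ω) :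
    |nonlocalRHS μ Ω k lam u0 v₁ x - nonlocalRHS μ Ω k lam u0 v₂ x|
      ≤ (2 * (|k 0| + 2 * Lk * (2 * M)) * μ.real Ω + |lam|) * b := by
  set C := |k 0| + 2 * Lk * (2 * M)
  have hC : 0 ≤ C := by
    have : 0 ≤ M := (abs_nonneg _).trans (hv₁M x hx)
    positivity
  have hpt : ∀ y ∈ Ω, ‖k (v₁ y - v₁ x) * (v₁ y - v₁ x) - k (v₂ y - v₂ x) * (v₂ y - v₂ x)‖
      ≤ 2 * C * b := by
    intro y hy
    have hv₁yx : |v₁ y - v₁ x| ≤ 2 * M := by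
      linarith [abs_sub (v₁ y) (v₁ x), hv₁M y hy, hv₁M x hx]
    have hv₂yx : |v₂ y - v₂ x| ≤ 2 * M := by
      linarith [abs_sub (v₂ y) (v₂ x), hv₂M y hy, hv₂M x hx]
    have hdiff : |(v₁ y - v₁ x) - (v₂ y - v₂ x)| ≤ 2 * b := by
      rw [show (v₁ y - v₁ x) - (v₂ y - v₂ x) = (v₁ y - v₂ y) - (v₁ x - v₂ x) by ring]
      linarith [abs_sub (v₁ y - v₂ y) (v₁ x - v₂ x), hb y hy, hb x hx]
    calc _ ≤ C * |(v₁ y - v₁ x) - (v₂ y - v₂ x)| := hk.abs_mul_self_sub_mul_self_le hv₁yx hv₂yx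
      _ ≤ C * (2 * b) := by gcongr
      _ = 2 * C * b := by ring
  have hint : |(∫ y in Ω, k (v₁ y - v₁ x) * (v₁ y - v₁ x) ∂μ)
      - ∫ y in Ω, k (v₂ y - v₂ x) * (v₂ y - v₂ x) ∂μ| ≤ 2 * C * b * μ.real Ω := by
    rw [← integral_sub (integrableOn_mul_self_comp_sub hΩ hμΩ hk hv₁ hv₁M (hv₁M x hx))
      (integrableOn_mul_self_comp_sub hΩ hμΩ hk hv₂ hv₂M (hv₂M x hx))]
    exact norm_setIntegral_le_of_norm_le_const hμΩ.lt_top hpt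
  have hlam : |lam * (v₁ x - v₂ x)| ≤ |lam| * b := by
    rw [abs_mul]; exact mul_le_mul_of_nonneg_left (hb x hx) (abs_nonneg lam)
  unfold nonlocalRHS
  calc _ = |((∫ y in Ω, k (v₁ y - v₁ x) * (v₁ y - v₁ x) ∂μ)
        - ∫ y in Ω, k (v₂ y - v₂ x) * (v₂ y - v₂ x) ∂μ) - lam * (v₁ x - v₂ x)| := by
        congr 1; ring
    _ ≤ 2 * C * b * μ.real Ω + |lam| * b := (abs_sub _ _).trans (add_le_add hint hlam)
    _ = _ := by ring

end NonlocalRHS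

theorem stmt_1_general
    (d : ℕ)
    (Ω : Set (Fin d → ℝ)) (hΩopen : IsOpen Ω) (hΩbdd : Bornology.IsBounded Ω)
    (K : ℝ → ℝ)
    (LK : NNReal) (hKlip : LipschitzWith LK K)
    (h : ℝ) (lam : ℝ) (T : ℝ)
    (u0 : (Fin d → ℝ) → ℝ) (u1 u2 : ℝ → (Fin d → ℝ) → ℝ)
    (hu1 : IsSolution d Ω K h lam T u0 u1)
    (hu2 : IsSolution d Ω K h lam T u0 u2) :
    ∀ t ∈ Icc (0:ℝ) T, ∀ᵐ x ∂(volume.restrict Ω), u1 t x = u2 t x := by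
  obtain ⟨hm1, ⟨M1, hM1⟩, hi1, hd1⟩ := hu1
  obtain ⟨hm2, ⟨M2, hM2⟩, hi2, hd2⟩ := hu2
  have hΩ : MeasurableSet Ω := hΩopen.measurableSet
  have hK : LipschitzWith (LK * ‖h⁻¹‖₊) fun ξ => K (ξ / h) := by
    simpa [Function.comp_def, div_eq_inv_mul] using hKlip.comp (lipschitzWith_smul h⁻¹)
  have hM1' t ht x hx : |u1 t x| ≤ max M1 M2 := (hM1 t ht x hx).trans (le_max_left _ _)
  have hM2' t ht x hx : |u2 t x| ≤ max M1 M2 := (hM2 t ht x hx).trans (le_max_right _ _)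
  have hzero := eq_zero_of_abs_deriv_le_mul_bound (w := fun t x => u1 t x - u2 t x)
    (fun x hx => by simp [hi1 x hx, hi2 x hx])
    (fun t ht x hx => (hd1 t ht x hx).sub (hd2 t ht x hx))
    (fun t ht x hx => (abs_sub _ _).trans (add_le_add (hM1' t ht x hx) (hM2' t ht x hx)))
    (fun t ht b hb x hx => abs_nonlocalRHS_sub_le hΩ hΩbdd.measure_lt_top.ne hK lam u0
      (hm1 t ht) (hm2 t ht) (hM1' t ht) (hM2' t ht) hb hx)
  intro t ht
  filter_upwards [ae_restrict_mem hΩ] with x hx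
  exact sub_eq_zero.mp (hzero t ht x hx)

/-- Uniqueness for problem P(Ω,u0): two solutions with the same initial datum
coincide for all `t ∈ [0,T]` and almost every `x ∈ Ω`. -/
theorem stmt_1
    (d : ℕ) (hd : 1 ≤ d)
    (Ω : Set (Fin d → ℝ)) (hΩopen : IsOpen Ω) (hΩbdd : Bornology.IsBounded Ω)
    (K : ℝ → ℝ) (hKnonneg : ∀ ξ, 0 ≤ K ξ) (BK : ℝ) (hKbdd : ∀ ξ, K ξ ≤ BK)
    (LK : NNReal) (hKlip : LipschitzWith LK K)
    (h : ℝ) (hh : 0 < h) (lam : ℝ) (hlam : 0 ≤ lam) (T : ℝ) (hT : 0 < T)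
    (u0 : (Fin d → ℝ) → ℝ) (u1 u2 : ℝ → (Fin d → ℝ) → ℝ)
    (hu1 : IsSolution d Ω K h lam T u0 u1)
    (hu2 : IsSolution d Ω K h lam T u0 u2) :
    ∀ t ∈ Icc (0:ℝ) T, ∀ᵐ x ∂(volume.restrict Ω), u1 t x = u2 t x :=
  stmt_1_general d Ω hΩopen hΩbdd K LK hKlip h lam T u0 u1 u2 hu1 hu2
end

section
/- Time invariance of the level set structure: let u be a solution of problem P(Ω,u0) on [0,T], and suppose x1, x2 ∈ Ω are such that u0(x1) = u0(x2) and the equation of problem P(Ω,u0) holds at x1 and at x2 for all t. Then u(t,x1) = u(t,x2) for all t ∈ [0,T]. -/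
/-!
The difference `g t = u(t,x₁) - u(t,x₂)` vanishes at `t = 0`, and since `s ↦ K(s/h)·s` is
Lipschitz on bounded sets, the two right-hand sides of the equation differ by at most a constant
times `|g t|` (the source terms cancel because `u0 x₁ = u0 x₂`). Gronwall's inequality then
forces `g ≡ 0`.
-/

open MeasureTheory Set

section

variable {α : Type*} [MeasurableSpace α] {μ : Measure α} {Ω : Set α}
  {K : ℝ → ℝ} {BK : ℝ} {LK : NNReal}

/-- The right-hand side of the equation of problem P(Ω,u0) at a state `v`. -/
noncomputable def solutionRate (μ : Measure α) (Ω : Set α) (K : ℝ → ℝ) (h lam : ℝ)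
    (u0 v : α → ℝ) (x : α) : ℝ :=
  (∫ y in Ω, K ((v y - v x) / h) * (v y - v x) ∂μ) + lam * (u0 x - v x)

lemma abs_kernel_mul_sub_kernel_mul_le (hKB : ∀ ξ, |K ξ| ≤ BK) (hKL : LipschitzWith LK K)
    (h s₁ s₂ : ℝ) :
    |K (s₁ / h) * s₁ - K (s₂ / h) * s₂| ≤ (BK + LK * |s₂| / |h|) * |s₁ - s₂| := by
  have hK_sub : |K (s₁ / h) - K (s₂ / h)| ≤ LK * (|s₁ - s₂| / |h|) := by
    simpa only [Real.dist_eq, ← sub_div, abs_div] using hKL.dist_le_mul (s₁ / h) (s₂ / h)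
  calc |K (s₁ / h) * s₁ - K (s₂ / h) * s₂|
      = |K (s₁ / h) * (s₁ - s₂) + (K (s₁ / h) - K (s₂ / h)) * s₂| := by ring_nf
    _ ≤ |K (s₁ / h)| * |s₁ - s₂| + |K (s₁ / h) - K (s₂ / h)| * |s₂| := by
        rw [← abs_mul, ← abs_mul]; exact abs_add_le _ _
    _ ≤ BK * |s₁ - s₂| + LK * (|s₁ - s₂| / |h|) * |s₂| := by gcongr; exact hKB _
    _ = (BK + LK * |s₂| / |h|) * |s₁ - s₂| := by ring

lemma integrableOn_kernel_mul (hΩ : MeasurableSet Ω) (hΩμ : μ Ω < ⊤) {v : α → ℝ}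
    (hv : Measurable v) {M : ℝ} (hvM : ∀ y ∈ Ω, |v y| ≤ M) (hKc : Continuous K)
    (hKB : ∀ ξ, |K ξ| ≤ BK) (h a : ℝ) :
    IntegrableOn (fun y => K ((v y - a) / h) * (v y - a)) Ω μ := by
  have hmeas : Measurable fun y => K ((v y - a) / h) * (v y - a) :=
    (hKc.measurable.comp ((hv.sub_const a).div_const h)).mul (hv.sub_const a)
  refine .of_bound hΩμ hmeas.aestronglyMeasurable (BK * (M + |a|)) ?_
  filter_upwards [ae_restrict_mem hΩ] with y hy
  rw [Real.norm_eq_abs, abs_mul]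
  have hvy : |v y - a| ≤ M + |a| := (abs_sub _ _).trans (by linarith [hvM y hy])
  exact mul_le_mul (hKB _) hvy (abs_nonneg _) ((abs_nonneg _).trans (hKB 0))

lemma abs_setIntegral_kernel_mul_sub_le (hΩ : MeasurableSet Ω) (hΩμ : μ Ω < ⊤)
    (hKB : ∀ ξ, |K ξ| ≤ BK) (hKL : LipschitzWith LK K) (h : ℝ) {v : α → ℝ}
    (hv : Measurable v) {M : ℝ} (hvM : ∀ y ∈ Ω, |v y| ≤ M) {a b : ℝ} (hb : |b| ≤ M) :
    |(∫ y in Ω, K ((v y - a) / h) * (v y - a) ∂μ) - ∫ y in Ω, K ((v y - b) / h) * (v y - b) ∂μ|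
      ≤ (BK + LK * (2 * M) / |h|) * |a - b| * μ.real Ω := by
  have hint := integrableOn_kernel_mul hΩ hΩμ hv hvM hKL.continuous hKB h
  rw [← integral_sub (hint a) (hint b), ← Real.norm_eq_abs]
  refine norm_setIntegral_le_of_norm_le_const hΩμ fun y hy => ?_
  have hyb : |v y - b| ≤ 2 * M := (abs_sub _ _).trans (by linarith [hvM y hy])
  calc _ ≤ (BK + LK * |v y - b| / |h|) * |(v y - a) - (v y - b)| :=
        abs_kernel_mul_sub_kernel_mul_le hKB hKL h _ _
    _ ≤ (BK + LK * (2 * M) / |h|) * |a - b| := by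
        rw [sub_sub_sub_cancel_left, abs_sub_comm b]; gcongr

lemma abs_solutionRate_sub_le (hΩ : MeasurableSet Ω) (hΩμ : μ Ω < ⊤)
    (hKB : ∀ ξ, |K ξ| ≤ BK) (hKL : LipschitzWith LK K) (h lam : ℝ) {u0 v : α → ℝ}
    (hv : Measurable v) {M : ℝ} (hvM : ∀ y ∈ Ω, |v y| ≤ M) {x₁ x₂ : α} (hx₂ : x₂ ∈ Ω)
    (hu0 : u0 x₁ = u0 x₂) :
    |solutionRate μ Ω K h lam u0 v x₁ - solutionRate μ Ω K h lam u0 v x₂|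
      ≤ ((BK + LK * (2 * M) / |h|) * μ.real Ω + |lam|) * |v x₁ - v x₂| := by
  calc _ = |((∫ y in Ω, K ((v y - v x₁) / h) * (v y - v x₁) ∂μ)
            - ∫ y in Ω, K ((v y - v x₂) / h) * (v y - v x₂) ∂μ) + lam * (v x₂ - v x₁)| := by
        rw [solutionRate, solutionRate, hu0]; congr 1; ring
    _ ≤ (BK + LK * (2 * M) / |h|) * |v x₁ - v x₂| * μ.real Ω + |lam| * |v x₁ - v x₂| := by
        refine (abs_add_le _ _).trans (add_le_add ?_ ?_)
        · exact abs_setIntegral_kernel_mul_sub_le hΩ hΩμ hKB hKL h hv hvM (hvM x₂ hx₂)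
        · rw [abs_mul, abs_sub_comm]
    _ = _ := by ring

end

theorem stmt_3_general
    (d : ℕ)
    (Ω : Set (Fin d → ℝ)) (hΩopen : IsOpen Ω) (hΩbdd : Bornology.IsBounded Ω)
    (K : ℝ → ℝ) (hKnonneg : ∀ ξ, 0 ≤ K ξ) (BK : ℝ) (hKbdd : ∀ ξ, K ξ ≤ BK)
    (LK : NNReal) (hKlip : LipschitzWith LK K)
    (h : ℝ) (lam : ℝ) (T : ℝ)
    (u0 : (Fin d → ℝ) → ℝ)
    (u : ℝ → (Fin d → ℝ) → ℝ)
    (hu : IsSolution d Ω K h lam T u0 u)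
    (x1 x2 : Fin d → ℝ) (hx1 : x1 ∈ Ω) (hx2 : x2 ∈ Ω)
    (heq0 : u0 x1 = u0 x2) :
    ∀ t ∈ Icc (0:ℝ) T, u t x1 = u t x2 := by
  obtain ⟨hmeas, ⟨M, hM⟩, hinit, hderiv⟩ := hu
  have hKB : ∀ ξ, |K ξ| ≤ BK := fun ξ => (abs_of_nonneg (hKnonneg ξ)).trans_le (hKbdd ξ)
  have hgderiv : ∀ t ∈ Icc 0 T, HasDerivWithinAt (fun τ => u τ x1 - u τ x2)
      (solutionRate volume Ω K h lam u0 (u t) x1 - solutionRate volume Ω K h lam u0 (u t) x2)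
      (Icc 0 T) t :=
    fun t ht => (hderiv t ht x1 hx1).sub (hderiv t ht x2 hx2)
  intro t ht
  refine sub_eq_zero.1 (eq_zero_of_abs_deriv_le_mul_abs_self_of_eq_zero_right
    (K := (BK + LK * (2 * M) / |h|) * volume.real Ω + |lam|)
    (fun τ hτ => (hgderiv τ hτ).continuousWithinAt)
    (fun τ hτ => (hgderiv τ (Ico_subset_Icc_self hτ)).mono_of_mem_nhdsWithin
      (Icc_mem_nhdsGE_of_mem hτ))
    (by rw [hinit x1 hx1, hinit x2 hx2, heq0, sub_self])
    (fun τ hτ => abs_solutionRate_sub_le hΩopen.measurableSet hΩbdd.measure_lt_top hKB hKlip h lam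
      (hmeas τ (Ico_subset_Icc_self hτ)) (hM τ (Ico_subset_Icc_self hτ)) hx2 heq0) t ht)

/-- Time invariance of the level set structure: if `u` solves P(Ω,u0) and
`u0(x1) = u0(x2)` for points `x1, x2 ∈ Ω` (where the equation holds for all `t`),
then `u(t,x1) = u(t,x2)` for all `t ∈ [0,T]`. -/
theorem stmt_3
    (d : ℕ) (hd : 1 ≤ d)
    (Ω : Set (Fin d → ℝ)) (hΩopen : IsOpen Ω) (hΩbdd : Bornology.IsBounded Ω)
    (K : ℝ → ℝ) (hKnonneg : ∀ ξ, 0 ≤ K ξ) (BK : ℝ) (hKbdd : ∀ ξ, K ξ ≤ BK)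
    (LK : NNReal) (hKlip : LipschitzWith LK K)
    (h : ℝ) (hh : 0 < h) (lam : ℝ) (hlam : 0 ≤ lam) (T : ℝ) (hT : 0 < T)
    (u0 : (Fin d → ℝ) → ℝ) (hu0m : Measurable u0) (M0 : ℝ) (hu0b : ∀ x ∈ Ω, |u0 x| ≤ M0)
    (u : ℝ → (Fin d → ℝ) → ℝ)
    (hu : IsSolution d Ω K h lam T u0 u)
    (x1 x2 : Fin d → ℝ) (hx1 : x1 ∈ Ω) (hx2 : x2 ∈ Ω)
    (heq0 : u0 x1 = u0 x2) :
    ∀ t ∈ Icc (0:ℝ) T, u t x1 = u t x2 :=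
  stmt_3_general d Ω hΩopen hΩbdd K hKnonneg BK hKbdd LK hKlip h lam T u0 u hu x1 x2 hx1 hx2 heq0
end

section
/- Contractivity of the semi-implicit fixed-point map: let w0, w_j : Ω → ℝ be bounded measurable, let τ > 0, t_j ≥ 0, λ ≥ 0, and let μ > 2|Ω|·sup K_h. Define, for bounded measurable φ : Ω → ℝ, A(φ)(x) = (1 + τ(λ+μ))^{-1} ( w_j(x) + τ ∫_Ω K_h(e^{μ t_j}(w_j(y) − w_j(x)))·(φ(y) − φ(x)) dy + τ λ w0(x) ). Then for all bounded measurable φ, ψ, sup_Ω |A(φ) − A(ψ)| ≤ (2τ|Ω|·sup K_h)/(1+τμ) · sup_Ω |φ − ψ|, the factor (2τ|Ω|·sup K_h)/(1+τμ) is strictly less than 1, and consequently A has a unique fixed point among bounded measurable functions on Ω (up to equality everywhere). -/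
/-!
Only the integral term of `A` depends on `φ`, and it is linear in `φ`, so
`A φ x - A ψ x = τ (1 + τ(λ+μ))⁻¹ ∫_Ω K_h(…) ((φ-ψ)(y) - (φ-ψ)(x)) dy`. The kernel is bounded
by `sup K_h`, which bounds this by `q · sup_Ω |φ - ψ|` with `q = 2τ|Ω| sup K_h / (1 + τμ)`,
and `q < 1` as soon as `μ > 2|Ω| sup K_h`. Uniqueness of the fixed point follows from this
estimate alone. For existence, apply Banach's fixed point theorem to `φ ↦ 1_Ω · A φ` on the
set of measurable functions bounded by `sup_Ω |A 0| / (1 - q)`: this map preserves that set,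
which is closed in the complete space of real functions with the uniform metric.
-/

open MeasureTheory Set Filter
open scoped ENNReal UniformConvergence

variable {α : Type*}

namespace UniformFun

theorem isClosed_setOf_measurable [MeasurableSpace α] {β : Type*} [PseudoEMetricSpace β]
    [MeasurableSpace β] [BorelSpace β] : IsClosed {f : α →ᵤ β | Measurable (toFun f)} := by
  refine isClosed_of_closure_subset fun f hf => ?_
  obtain ⟨g, hg, hgf⟩ := mem_closure_iff_seq_limit.1 hf
  exact measurable_of_tendsto_metrizable hg
    (tendsto_pi_nhds.2 fun x => ((lipschitzWith_eval x).continuous.tendsto f).comp hgf)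

theorem isClosed_setOf_forall_abs_le (B : ℝ) :
    IsClosed {f : α →ᵤ ℝ | ∀ x, |toFun f x| ≤ B} := by
  simp only [ofPred_forall]
  exact isClosed_iInter fun x => isClosed_le (lipschitzWith_eval x).continuous.abs continuous_const

theorem edist_ne_top_of_forall_abs_le {f g : α →ᵤ ℝ} {B : ℝ} (hf : ∀ x, |toFun f x| ≤ B)
    (hg : ∀ x, |toFun g x| ≤ B) : edist f g ≠ ∞ := by
  refine ne_top_of_le_ne_top ENNReal.ofReal_ne_top
    ((edist_le (C := ENNReal.ofReal (2 * B))).2 fun x => ?_)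
  rw [edist_dist, Real.dist_eq]
  exact ENNReal.ofReal_le_ofReal (by linarith [abs_sub (toFun f x) (toFun g x), hf x, hg x])

theorem abs_sub_le_toReal_edist {f g : α →ᵤ ℝ} (h : edist f g ≠ ∞) (x : α) :
    |toFun f x - toFun g x| ≤ (edist f g).toReal := by
  rw [← Real.dist_eq, dist_edist]
  exact ENNReal.toReal_mono h edist_eval_le

end UniformFun

variable [MeasurableSpace α]

def BddMeasurableOn (s : Set α) (φ : α → ℝ) : Prop :=
  Measurable φ ∧ ∃ M, ∀ x ∈ s, |φ x| ≤ M

theorem BddMeasurableOn.zero (s : Set α) : BddMeasurableOn s 0 :=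
  ⟨measurable_const, 0, by simp⟩

theorem BddMeasurableOn.bddAbove_image_abs_sub {s : Set α} {φ ψ : α → ℝ}
    (hφ : BddMeasurableOn s φ) (hψ : BddMeasurableOn s ψ) :
    BddAbove ((fun x => |φ x - ψ x|) '' s) := by
  obtain ⟨-, Mφ, hMφ⟩ := hφ
  obtain ⟨-, Mψ, hMψ⟩ := hψ
  refine ⟨Mφ + Mψ, ?_⟩
  rintro _ ⟨x, hx, rfl⟩
  exact (abs_sub _ _).trans (add_le_add (hMφ x hx) (hMψ x hx))

theorem BddMeasurableOn.abs_sub_le_sSup {s : Set α} {φ ψ : α → ℝ}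
    (hφ : BddMeasurableOn s φ) (hψ : BddMeasurableOn s ψ) {x : α} (hx : x ∈ s) :
    |φ x - ψ x| ≤ sSup ((fun x => |φ x - ψ x|) '' s) :=
  le_csSup (hφ.bddAbove_image_abs_sub hψ) ⟨x, hx, rfl⟩

def SupContractingOn (s : Set α) (q : ℝ) (T : (α → ℝ) → α → ℝ) : Prop :=
  ∀ ⦃φ ψ⦄, BddMeasurableOn s φ → BddMeasurableOn s ψ →
    ∀ δ, (∀ y ∈ s, |φ y - ψ y| ≤ δ) → ∀ x ∈ s, |T φ x - T ψ x| ≤ q * δ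

namespace SupContractingOn

variable {s : Set α} {q : ℝ} {T : (α → ℝ) → α → ℝ}

theorem mono {q' : ℝ} (hT : SupContractingOn s q T) (hq : q ≤ q') :
    SupContractingOn s q' T := by
  intro φ ψ hφ hψ δ hδ x hx
  have hδ0 : 0 ≤ δ := (abs_nonneg _).trans (hδ x hx)
  exact (hT hφ hψ δ hδ x hx).trans (mul_le_mul_of_nonneg_right hq hδ0)

theorem sSup_image_abs_sub_le (hT : SupContractingOn s q T) {φ ψ : α → ℝ}
    (hφ : BddMeasurableOn s φ) (hψ : BddMeasurableOn s ψ) :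
    sSup ((fun x => |T φ x - T ψ x|) '' s) ≤ q * sSup ((fun x => |φ x - ψ x|) '' s) := by
  rcases s.eq_empty_or_nonempty with rfl | hs
  · simp
  refine csSup_le (hs.image _) ?_
  rintro _ ⟨x, hx, rfl⟩
  exact hT hφ hψ _ (fun y hy => hφ.abs_sub_le_sSup hψ hy) x hx

theorem eqOn_of_isFixedPt (hT : SupContractingOn s q T) (hq : q < 1) {φ ψ : α → ℝ}
    (hφ : BddMeasurableOn s φ) (hψ : BddMeasurableOn s ψ)
    (hφT : ∀ x ∈ s, T φ x = φ x) (hψT : ∀ x ∈ s, T ψ x = ψ x) :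
    ∀ x ∈ s, φ x = ψ x := by
  intro x hx
  set D := sSup ((fun x => |φ x - ψ x|) '' s)
  have hD : D ≤ q * D := by
    refine csSup_le ⟨_, x, hx, rfl⟩ ?_
    rintro _ ⟨y, hy, rfl⟩
    show |φ y - ψ y| ≤ q * D
    rw [← hφT y hy, ← hψT y hy]
    exact hT hφ hψ D (fun z hz => hφ.abs_sub_le_sSup hψ hz) y hy
  have hxD : |φ x - ψ x| ≤ D := hφ.abs_sub_le_sSup hψ hx
  have hD0 : D ≤ 0 := by nlinarith [(abs_nonneg _).trans hxD]
  exact sub_eq_zero.1 (abs_nonpos_iff.1 (hxD.trans hD0))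

theorem abs_apply_le (hT : SupContractingOn s q T) (hq : q < 1) {a : ℝ}
    (ha : ∀ x ∈ s, |T 0 x| ≤ a) {φ : α → ℝ} (hφm : Measurable φ)
    (hφ : ∀ x ∈ s, |φ x| ≤ |a| / (1 - q)) : ∀ x ∈ s, |T φ x| ≤ |a| / (1 - q) := by
  intro x hx
  have hcontr := hT ⟨hφm, _, hφ⟩ (BddMeasurableOn.zero s) _ (by simpa using hφ) x hx
  have hB : |a| + q * (|a| / (1 - q)) = |a| / (1 - q) := by
    field_simp [(sub_pos.2 hq).ne']
    ring
  calc |T φ x| ≤ |T 0 x| + |T φ x - T 0 x| := by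
        linarith [abs_sub_abs_le_abs_sub (T φ x) (T 0 x)]
    _ ≤ |a| + q * (|a| / (1 - q)) := add_le_add ((ha x hx).trans (le_abs_self a)) hcontr
    _ = |a| / (1 - q) := hB

theorem exists_isFixedPt (hT : SupContractingOn s q T) (hs : MeasurableSet s) (hq0 : 0 ≤ q)
    (hq1 : q < 1) (hmeas : ∀ φ, Measurable φ → Measurable (T φ)) {a : ℝ}
    (ha : ∀ x ∈ s, |T 0 x| ≤ a) :
    ∃ φ, BddMeasurableOn s φ ∧ ∀ x ∈ s, T φ x = φ x := by
  set B := |a| / (1 - q)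
  have hB : 0 ≤ B := div_nonneg (abs_nonneg a) (sub_pos.2 hq1).le
  -- `T φ` is not controlled off `s`; cutting it off there keeps uniform distances finite.
  let F : (α →ᵤ ℝ) → (α →ᵤ ℝ) := fun f =>
    UniformFun.ofFun (s.indicator (T (UniformFun.toFun f)))
  let S : Set (α →ᵤ ℝ) :=
    {f | Measurable (UniformFun.toFun f)} ∩ {f | ∀ x, |UniformFun.toFun f x| ≤ B}
  have hSc : IsComplete S :=
    (UniformFun.isClosed_setOf_measurable.inter
      (UniformFun.isClosed_setOf_forall_abs_le B)).isComplete
  have hSF : MapsTo F S S := by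
    rintro f ⟨hfm, hfB⟩
    refine ⟨(hmeas _ hfm).indicator hs, fun x => ?_⟩
    by_cases hx : x ∈ s
    · simpa [F, indicator_of_mem hx] using hT.abs_apply_le hq1 ha hfm (fun y _ => hfB y) x hx
    · simpa [F, indicator_of_notMem hx] using hB
  have hS_edist : ∀ f ∈ S, ∀ g ∈ S, edist f g ≠ ∞ := fun f hf g hg =>
    UniformFun.edist_ne_top_of_forall_abs_le hf.2 hg.2
  have hF : ContractingWith q.toNNReal (hSF.restrict F S S) := by
    refine ⟨Real.toNNReal_lt_one.2 hq1, fun f g => UniformFun.edist_le.2 fun x => ?_⟩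
    have hfg := hS_edist f f.2 g g.2
    by_cases hx : x ∈ s
    · have hδ := UniformFun.abs_sub_le_toReal_edist hfg
      have hTfg := hT ⟨f.2.1, B, fun y _ => f.2.2 y⟩ ⟨g.2.1, B, fun y _ => g.2.2 y⟩ _
        (fun y _ => hδ y) x hx
      simp only [MapsTo.val_restrict_apply, F, UniformFun.toFun_ofFun, indicator_of_mem hx]
      rw [Subtype.edist_eq, edist_dist, Real.dist_eq, ← ENNReal.ofReal_toReal hfg,
        ← ENNReal.ofReal_coe_nnreal, Real.coe_toNNReal q hq0, ← ENNReal.ofReal_mul hq0]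
      exact ENNReal.ofReal_le_ofReal hTfg
    · simp [F, indicator_of_notMem hx]
  have h0S : UniformFun.ofFun 0 ∈ S := ⟨measurable_const, by simp [hB]⟩
  obtain ⟨φ, hφS, hφF, -⟩ := hF.exists_fixedPoint' hSc hSF h0S (hS_edist _ h0S _ (hSF h0S))
  refine ⟨UniformFun.toFun φ, ⟨hφS.1, B, fun x _ => hφS.2 x⟩, fun x hx => ?_⟩
  simpa [F, indicator_of_mem hx] using congrFun (congrArg UniformFun.toFun hφF) x

end SupContractingOn

section NonlocalIntegral

variable (μ : Measure α) (s : Set α) (k : α → α → ℝ)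

noncomputable def nonlocalIntegral (φ : α → ℝ) (x : α) : ℝ :=
  ∫ y in s, k x y * (φ y - φ x) ∂μ

variable {μ s k} {S : ℝ}

theorem abs_nonlocalIntegral_le (hk : ∀ x y, |k x y| ≤ S) (hs : μ s < ∞) {φ : α → ℝ} {δ : ℝ}
    (hφ : ∀ y ∈ s, |φ y| ≤ δ) {x : α} (hx : x ∈ s) :
    |nonlocalIntegral μ s k φ x| ≤ 2 * S * δ * μ.real s := by
  have hbound : ∀ y ∈ s, ‖k x y * (φ y - φ x)‖ ≤ S * (2 * δ) := fun y hy => by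
    rw [Real.norm_eq_abs, abs_mul]
    exact mul_le_mul (hk x y) (by linarith [abs_sub (φ y) (φ x), hφ y hy, hφ x hx])
      (abs_nonneg _) ((abs_nonneg _).trans (hk x y))
  calc |nonlocalIntegral μ s k φ x| ≤ S * (2 * δ) * μ.real s :=
        norm_setIntegral_le_of_norm_le_const hs hbound
    _ = 2 * S * δ * μ.real s := by ring

theorem integrableOn_kernel_mul_sub (hk : ∀ x y, |k x y| ≤ S)
    (hkm : Measurable (Function.uncurry k)) (hsm : MeasurableSet s) (hs : μ s < ∞)
    {φ : α → ℝ} (hφ : BddMeasurableOn s φ) (x : α) :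
    IntegrableOn (fun y => k x y * (φ y - φ x)) s μ := by
  obtain ⟨hφm, M, hM⟩ := hφ
  have : IsFiniteMeasure (μ.restrict s) := ⟨by rwa [Measure.restrict_apply_univ]⟩
  refine Integrable.mono' (integrable_const (S * (M + |φ x|)))
    ((hkm.comp measurable_prodMk_left).mul (hφm.sub measurable_const)).aestronglyMeasurable
    ((ae_restrict_iff' hsm).2 (Eventually.of_forall fun y hy => ?_))
  rw [Real.norm_eq_abs, abs_mul]
  exact mul_le_mul (hk x y) ((abs_sub _ _).trans (add_le_add_left (hM y hy) _))
    (abs_nonneg _) ((abs_nonneg _).trans (hk x y))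

theorem abs_nonlocalIntegral_sub_le (hk : ∀ x y, |k x y| ≤ S)
    (hkm : Measurable (Function.uncurry k)) (hsm : MeasurableSet s) (hs : μ s < ∞)
    {φ ψ : α → ℝ} (hφ : BddMeasurableOn s φ) (hψ : BddMeasurableOn s ψ) {δ : ℝ}
    (hφψ : ∀ y ∈ s, |φ y - ψ y| ≤ δ) {x : α} (hx : x ∈ s) :
    |nonlocalIntegral μ s k φ x - nonlocalIntegral μ s k ψ x| ≤ 2 * S * δ * μ.real s := by
  have hsub : nonlocalIntegral μ s k φ x - nonlocalIntegral μ s k ψ x =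
      nonlocalIntegral μ s k (φ - ψ) x := by
    rw [nonlocalIntegral, nonlocalIntegral, ← integral_sub
      (integrableOn_kernel_mul_sub hk hkm hsm hs hφ x)
      (integrableOn_kernel_mul_sub hk hkm hsm hs hψ x)]
    simp only [nonlocalIntegral, Pi.sub_apply, mul_sub]
    congr 1 with y
    ring
  rw [hsub]
  exact abs_nonlocalIntegral_le hk hs hφψ hx

theorem measurable_nonlocalIntegral [SFinite μ] (hkm : Measurable (Function.uncurry k))
    {φ : α → ℝ} (hφ : Measurable φ) : Measurable (nonlocalIntegral μ s k φ) :=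
  (hkm.mul ((hφ.comp measurable_snd).sub (hφ.comp measurable_fst))).stronglyMeasurable
    |>.integral_prod_right' |>.measurable

variable {A : (α → ℝ) → α → ℝ} {c τ : ℝ} {f g : α → ℝ}

theorem supContractingOn_of_eq_nonlocal
    (hA : ∀ φ x, A φ x = c * (f x + τ * nonlocalIntegral μ s k φ x + g x))
    (hc : 0 ≤ c) (hτ : 0 ≤ τ) (hk : ∀ x y, |k x y| ≤ S)
    (hkm : Measurable (Function.uncurry k)) (hsm : MeasurableSet s) (hs : μ s < ∞) :
    SupContractingOn s (c * τ * (2 * S * μ.real s)) A := by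
  intro φ ψ hφ hψ δ hφψ x hx
  have hdiff : A φ x - A ψ x =
      c * τ * (nonlocalIntegral μ s k φ x - nonlocalIntegral μ s k ψ x) := by
    rw [hA, hA]
    ring
  rw [hdiff, abs_mul, abs_of_nonneg (mul_nonneg hc hτ)]
  calc c * τ * |nonlocalIntegral μ s k φ x - nonlocalIntegral μ s k ψ x|
      ≤ c * τ * (2 * S * δ * μ.real s) := mul_le_mul_of_nonneg_left
        (abs_nonlocalIntegral_sub_le hk hkm hsm hs hφ hψ hφψ hx) (mul_nonneg hc hτ)
    _ = c * τ * (2 * S * μ.real s) * δ := by ring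

theorem measurable_of_eq_nonlocal [SFinite μ]
    (hA : ∀ φ x, A φ x = c * (f x + τ * nonlocalIntegral μ s k φ x + g x))
    (hf : Measurable f) (hg : Measurable g) (hkm : Measurable (Function.uncurry k))
    {φ : α → ℝ} (hφ : Measurable φ) : Measurable (A φ) := by
  rw [funext (hA φ)]
  exact ((hf.add ((measurable_nonlocalIntegral hkm hφ).const_mul τ)).add hg).const_mul c

theorem apply_zero_of_eq_nonlocal
    (hA : ∀ φ x, A φ x = c * (f x + τ * nonlocalIntegral μ s k φ x + g x)) (x : α) :
    A 0 x = c * (f x + g x) := by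
  simp [hA, nonlocalIntegral]

end NonlocalIntegral

theorem stmt_4_general
    (d : ℕ)
    (Ω : Set (Fin d → ℝ)) (hΩopen : IsOpen Ω) (hΩbdd : Bornology.IsBounded Ω)
    (K : ℝ → ℝ) (hKnonneg : ∀ ξ, 0 ≤ K ξ) (BK : ℝ) (hKbdd : ∀ ξ, K ξ ≤ BK)
    (LK : NNReal) (hKlip : LipschitzWith LK K)
    (h : ℝ)
    (w0 wj : (Fin d → ℝ) → ℝ)
    (hw0m : Measurable w0) (Mw0 : ℝ) (hw0b : ∀ x ∈ Ω, |w0 x| ≤ Mw0)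
    (hwjm : Measurable wj) (Mwj : ℝ) (hwjb : ∀ x ∈ Ω, |wj x| ≤ Mwj)
    (τ : ℝ) (hτ : 0 < τ) (tj : ℝ) (lam : ℝ) (hlam : 0 ≤ lam)
    (SK : ℝ) (hSK : SK = ⨆ ξ : ℝ, K (ξ / h))
    (μ : ℝ) (hμ : 2 * (volume Ω).toReal * SK < μ)
    (A : ((Fin d → ℝ) → ℝ) → (Fin d → ℝ) → ℝ)
    (hA : ∀ φ : (Fin d → ℝ) → ℝ, ∀ x : Fin d → ℝ,
      A φ x = (1 + τ * (lam + μ))⁻¹ *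
        (wj x + τ * (∫ y in Ω, K ((Real.exp (μ * tj) * (wj y - wj x)) / h) * (φ y - φ x))
          + τ * lam * w0 x)) :
    (∀ φ ψ : (Fin d → ℝ) → ℝ,
      (Measurable φ ∧ ∃ Mφ : ℝ, ∀ x ∈ Ω, |φ x| ≤ Mφ) →
      (Measurable ψ ∧ ∃ Mψ : ℝ, ∀ x ∈ Ω, |ψ x| ≤ Mψ) →
      sSup ((fun x => |A φ x - A ψ x|) '' Ω) ≤
        (2 * τ * (volume Ω).toReal * SK) / (1 + τ * μ) *
          sSup ((fun x => |φ x - ψ x|) '' Ω)) ∧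
    (2 * τ * (volume Ω).toReal * SK) / (1 + τ * μ) < 1 ∧
    (∃ φ : (Fin d → ℝ) → ℝ,
      (Measurable φ ∧ ∃ Mφ : ℝ, ∀ x ∈ Ω, |φ x| ≤ Mφ) ∧
      (∀ x ∈ Ω, A φ x = φ x) ∧
      (∀ ψ : (Fin d → ℝ) → ℝ,
        (Measurable ψ ∧ ∃ Mψ : ℝ, ∀ x ∈ Ω, |ψ x| ≤ Mψ) →
        (∀ x ∈ Ω, A ψ x = ψ x) → ∀ x ∈ Ω, ψ x = φ x)) := by
  have hΩm : MeasurableSet Ω := hΩopen.measurableSet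
  have hΩfin : volume Ω < ∞ := hΩbdd.measure_lt_top
  have hKS : ∀ ξ, K (ξ / h) ≤ SK :=
    hSK ▸ le_ciSup ⟨BK, by rintro _ ⟨ξ, rfl⟩; exact hKbdd _⟩
  let k x y := K (Real.exp (μ * tj) * (wj y - wj x) / h)
  have hk : ∀ x y, |k x y| ≤ SK := fun x y => (abs_of_nonneg (hKnonneg _)).trans_le (hKS _)
  have hkm : Measurable (Function.uncurry k) := hKlip.continuous.measurable.comp
    ((((hwjm.comp measurable_snd).sub (hwjm.comp measurable_fst)).const_mul _).div_const h)
  have hA' : ∀ φ x, A φ x = (1 + τ * (lam + μ))⁻¹ *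
      (wj x + τ * nonlocalIntegral volume Ω k φ x + τ * lam * w0 x) := hA
  have hSK0 : 0 ≤ SK := (hKnonneg _).trans (hKS 0)
  have hμ0 : 0 < μ := lt_of_le_of_lt (by positivity) hμ
  have hc : 0 ≤ (1 + τ * (lam + μ))⁻¹ := by positivity
  set q := 2 * τ * (volume Ω).toReal * SK / (1 + τ * μ)
  have hq0 : 0 ≤ q := by positivity
  have hq1 : q < 1 := by rw [div_lt_one (by positivity)]; nlinarith
  have hT : SupContractingOn Ω q A := by
    refine (supContractingOn_of_eq_nonlocal hA' hc hτ.le hk hkm hΩm hΩfin).mono ?_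
    calc _ = 2 * τ * (volume Ω).toReal * SK / (1 + τ * (lam + μ)) := by
          rw [measureReal_def]; ring
      _ ≤ q := div_le_div_of_nonneg_left (by positivity) (by positivity) (by nlinarith)
  have hA0 : ∀ x ∈ Ω, |A 0 x| ≤ (1 + τ * (lam + μ))⁻¹ * (Mwj + τ * lam * Mw0) := by
    intro x hx
    rw [apply_zero_of_eq_nonlocal hA', abs_mul, abs_of_nonneg hc]
    refine mul_le_mul_of_nonneg_left ((abs_add_le _ _).trans ?_) hc
    rw [abs_mul, abs_of_nonneg (by positivity : 0 ≤ τ * lam)]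
    gcongr
    exacts [hwjb x hx, hw0b x hx]
  refine ⟨fun φ ψ hφ hψ => hT.sSup_image_abs_sub_le hφ hψ, hq1, ?_⟩
  obtain ⟨φ, hφ, hφA⟩ := hT.exists_isFixedPt hΩm hq0 hq1
    (fun φ => measurable_of_eq_nonlocal hA' hwjm (hw0m.const_mul _) hkm) hA0
  exact ⟨φ, hφ, hφA, fun ψ hψ hψA => hT.eqOn_of_isFixedPt hq1 hψ hφ hψA hφA⟩

/-- Contractivity of the semi-implicit fixed-point map
`A(φ)(x) = (1+τ(λ+μ))⁻¹ (w_j(x) + τ ∫_Ω K_h(e^{μ t_j}(w_j(y)−w_j(x)))·(φ(y)−φ(x)) dy + τλ w0(x))`: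
for `μ > 2|Ω|·sup K_h`, `A` contracts the sup-distance over `Ω` with factor
`2τ|Ω|·sup K_h/(1+τμ) < 1`, and hence has a unique fixed point among bounded
measurable functions. -/
theorem stmt_4
    (d : ℕ) (hd : 1 ≤ d)
    (Ω : Set (Fin d → ℝ)) (hΩopen : IsOpen Ω) (hΩbdd : Bornology.IsBounded Ω)
    (K : ℝ → ℝ) (hKnonneg : ∀ ξ, 0 ≤ K ξ) (BK : ℝ) (hKbdd : ∀ ξ, K ξ ≤ BK)
    (LK : NNReal) (hKlip : LipschitzWith LK K)
    (h : ℝ) (hh : 0 < h)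
    (w0 wj : (Fin d → ℝ) → ℝ)
    (hw0m : Measurable w0) (Mw0 : ℝ) (hw0b : ∀ x ∈ Ω, |w0 x| ≤ Mw0)
    (hwjm : Measurable wj) (Mwj : ℝ) (hwjb : ∀ x ∈ Ω, |wj x| ≤ Mwj)
    (τ : ℝ) (hτ : 0 < τ) (tj : ℝ) (htj : 0 ≤ tj) (lam : ℝ) (hlam : 0 ≤ lam)
    (SK : ℝ) (hSK : SK = ⨆ ξ : ℝ, K (ξ / h))
    (μ : ℝ) (hμ : 2 * (volume Ω).toReal * SK < μ)
    (A : ((Fin d → ℝ) → ℝ) → (Fin d → ℝ) → ℝ)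
    (hA : ∀ φ : (Fin d → ℝ) → ℝ, ∀ x : Fin d → ℝ,
      A φ x = (1 + τ * (lam + μ))⁻¹ *
        (wj x + τ * (∫ y in Ω, K ((Real.exp (μ * tj) * (wj y - wj x)) / h) * (φ y - φ x))
          + τ * lam * w0 x)) :
    (∀ φ ψ : (Fin d → ℝ) → ℝ,
      (Measurable φ ∧ ∃ Mφ : ℝ, ∀ x ∈ Ω, |φ x| ≤ Mφ) →
      (Measurable ψ ∧ ∃ Mψ : ℝ, ∀ x ∈ Ω, |ψ x| ≤ Mψ) →
      sSup ((fun x => |A φ x - A ψ x|) '' Ω) ≤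
        (2 * τ * (volume Ω).toReal * SK) / (1 + τ * μ) *
          sSup ((fun x => |φ x - ψ x|) '' Ω)) ∧
    (2 * τ * (volume Ω).toReal * SK) / (1 + τ * μ) < 1 ∧
    (∃ φ : (Fin d → ℝ) → ℝ,
      (Measurable φ ∧ ∃ Mφ : ℝ, ∀ x ∈ Ω, |φ x| ≤ Mφ) ∧
      (∀ x ∈ Ω, A φ x = φ x) ∧
      (∀ ψ : (Fin d → ℝ) → ℝ,
        (Measurable ψ ∧ ∃ Mψ : ℝ, ∀ x ∈ Ω, |ψ x| ≤ Mψ) →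
        (∀ x ∈ Ω, A ψ x = ψ x) → ∀ x ∈ Ω, ψ x = φ x)) :=
  stmt_4_general d Ω hΩopen hΩbdd K hKnonneg BK hKbdd LK hKlip h w0 wj hw0m Mw0 hw0b hwjm Mwj hwjb τ
    hτ tj lam hlam SK hSK μ hμ A hA
end

section
/- Uniform L∞ estimate for the semi-implicit time discretization: let w0, w_j : Ω → ℝ be bounded measurable, τ > 0, t_j ≥ 0, λ ≥ 0 and μ > 2|Ω|·sup K_h, and suppose the bounded measurable function w_{j+1} : Ω → ℝ satisfies, for every x ∈ Ω, w_{j+1}(x) = w_j(x) + τ ∫_Ω K_h(e^{μ t_j}(w_j(y) − w_j(x)))·(w_{j+1}(y) − w_{j+1}(x)) dy + τλ(w0(x) − w_{j+1}(x)) − τμ w_{j+1}(x). Then sup_Ω |w_{j+1}| ≤ ( sup_Ω |w_j| + τλ sup_Ω |w0| ) / ( 1 + τ(λ + μ − 2|Ω|·sup K_h) ). -/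
open MeasureTheory Set

/-! Writing the scheme as `(1 + τλ + τμ) w_{j+1}(x) = w_j(x) + τ I(x) + τλ w0(x)`, the nonlocal term
satisfies `|I(x)| ≤ 2 |Ω| sup K_h · sup_Ω |w_{j+1}|`, because `0 ≤ K_h ≤ sup K_h` and
`|w_{j+1}(y) - w_{j+1}(x)| ≤ 2 sup_Ω |w_{j+1}|`. Taking the supremum over `x`, the term
`2 τ |Ω| sup K_h · sup_Ω |w_{j+1}|` is absorbed into the left-hand side, which is possible
exactly because `μ > 2 |Ω| sup K_h`. -/

theorem le_csSup_image_of_forall_le {α β : Type*} [ConditionallyCompleteLattice β]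
    {f : α → β} {s : Set α} {M : β} (hf : ∀ y ∈ s, f y ≤ M) {y : α} (hy : y ∈ s) :
    f y ≤ sSup (f '' s) :=
  le_csSup ⟨M, forall_mem_image.2 hf⟩ (mem_image_of_mem f hy)

theorem csSup_le_div_of_forall_mul_le {s : Set ℝ} (hs : s.Nonempty) {P c A : ℝ} (hP : 0 < P)
    (hcP : c < P) (h : ∀ a ∈ s, P * a ≤ A + c * sSup s) : sSup s ≤ A / (P - c) := by
  have hsup : sSup s ≤ (A + c * sSup s) / P :=
    csSup_le hs fun a ha => (le_div_iff₀' hP).2 (h a ha)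
  rw [le_div_iff₀' hP] at hsup
  rw [le_div_iff₀' (sub_pos.2 hcP)]
  linarith

theorem abs_setIntegral_mul_sub_le {α : Type*} [MeasurableSpace α] {μ : Measure α} {s : Set α}
    (hs : μ s < ⊤) {k u : α → ℝ} {κ S : ℝ} (hk0 : ∀ y ∈ s, 0 ≤ k y) (hk : ∀ y ∈ s, k y ≤ κ)
    (hu : ∀ y ∈ s, |u y| ≤ S) {z : α} (hz : z ∈ s) :
    |∫ y in s, k y * (u y - u z) ∂μ| ≤ 2 * μ.real s * κ * S := by
  have hκ : 0 ≤ κ := (hk0 z hz).trans (hk z hz)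
  have hpt : ∀ y ∈ s, ‖k y * (u y - u z)‖ ≤ κ * (2 * S) := by
    intro y hy
    rw [Real.norm_eq_abs, abs_mul, abs_of_nonneg (hk0 y hy)]
    have hdiff : |u y - u z| ≤ 2 * S := by
      linarith [abs_sub (u y) (u z), hu y hy, hu z hz]
    exact mul_le_mul (hk y hy) hdiff (abs_nonneg _) hκ
  calc |∫ y in s, k y * (u y - u z) ∂μ| ≤ κ * (2 * S) * μ.real s :=
        norm_setIntegral_le_of_norm_le_const hs hpt
    _ = 2 * μ.real s * κ * S := by ring

theorem one_add_mul_abs_le_of_implicit_step {u a b I τ lam μ : ℝ} (hτ : 0 ≤ τ) (hlam : 0 ≤ lam)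
    (hμ : 0 ≤ μ) (h : u = a + τ * I + τ * lam * (b - u) - τ * μ * u) :
    (1 + τ * lam + τ * μ) * |u| ≤ |a| + τ * |I| + τ * lam * |b| := by
  have hτlam : 0 ≤ τ * lam := mul_nonneg hτ hlam
  have hP : 0 ≤ 1 + τ * lam + τ * μ := by nlinarith [mul_nonneg hτ hμ]
  calc (1 + τ * lam + τ * μ) * |u| = |(1 + τ * lam + τ * μ) * u| := by
        rw [abs_mul, abs_of_nonneg hP]
    _ = |a + τ * I + τ * lam * b| := by congr 1; linarith
    _ ≤ |a| + |τ * I| + |τ * lam * b| := abs_add_three _ _ _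
    _ = |a| + τ * |I| + τ * lam * |b| := by
        rw [abs_mul τ, abs_mul (τ * lam), abs_of_nonneg hτ, abs_of_nonneg hτlam]

theorem stmt_5_general
    (d : ℕ)
    (Ω : Set (Fin d → ℝ)) (hΩbdd : Bornology.IsBounded Ω)
    (K : ℝ → ℝ) (hKnonneg : ∀ ξ, 0 ≤ K ξ) (BK : ℝ) (hKbdd : ∀ ξ, K ξ ≤ BK)
    (h : ℝ)
    (w0 wj wj1 : (Fin d → ℝ) → ℝ)
    (Mw0 : ℝ) (hw0b : ∀ x ∈ Ω, |w0 x| ≤ Mw0)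
    (Mwj : ℝ) (hwjb : ∀ x ∈ Ω, |wj x| ≤ Mwj)
    (Mwj1 : ℝ) (hwj1b : ∀ x ∈ Ω, |wj1 x| ≤ Mwj1)
    (τ : ℝ) (hτ : 0 < τ) (tj : ℝ) (lam : ℝ) (hlam : 0 ≤ lam)
    (SK : ℝ) (hSK : SK = ⨆ ξ : ℝ, K (ξ / h))
    (μ : ℝ) (hμ : 2 * (volume Ω).toReal * SK < μ)
    (heq : ∀ x ∈ Ω,
      wj1 x = wj x
        + τ * (∫ y in Ω, K ((Real.exp (μ * tj) * (wj y - wj x)) / h) * (wj1 y - wj1 x))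
        + τ * lam * (w0 x - wj1 x) - τ * μ * wj1 x) :
    ∀ x ∈ Ω, |wj1 x| ≤
      (sSup ((fun x => |wj x|) '' Ω) + τ * lam * sSup ((fun x => |w0 x|) '' Ω)) /
        (1 + τ * (lam + μ - 2 * (volume Ω).toReal * SK)) := by
  intro x hx
  have hKle : ∀ a, K (a / h) ≤ SK :=
    fun a => hSK ▸ le_ciSup (f := fun ξ => K (ξ / h)) ⟨BK, forall_mem_range.2 fun ξ => hKbdd _⟩ a
  have hSK0 : 0 ≤ SK := (hKnonneg _).trans (hKle 0)
  have hμ0 : 0 ≤ μ := le_trans (by positivity) hμ.le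
  set V := (volume Ω).toReal
  set Mj := sSup ((fun x => |wj x|) '' Ω)
  set M0 := sSup ((fun x => |w0 x|) '' Ω)
  set S := sSup ((fun x => |wj1 x|) '' Ω)
  have hS : ∀ y ∈ Ω, |wj1 y| ≤ S := fun y hy => le_csSup_image_of_forall_le hwj1b hy
  have step : ∀ z ∈ Ω,
      (1 + τ * lam + τ * μ) * |wj1 z| ≤ (Mj + τ * lam * M0) + τ * (2 * V * SK) * S := by
    intro z hz
    have hI := abs_setIntegral_mul_sub_le (μ := volume) hΩbdd.measure_lt_top
      (fun y _ => hKnonneg ((Real.exp (μ * tj) * (wj y - wj z)) / h)) (fun y _ => hKle _) hS hz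
    have hwj := le_csSup_image_of_forall_le hwjb hz
    have hw0 := le_csSup_image_of_forall_le hw0b hz
    refine (one_add_mul_abs_le_of_implicit_step hτ.le hlam hμ0 (heq z hz)).trans ?_
    calc _ ≤ Mj + τ * (2 * V * SK * S) + τ * lam * M0 := by gcongr; exact hI
      _ = _ := by ring
  have hsup := csSup_le_div_of_forall_mul_le ⟨_, mem_image_of_mem _ hx⟩
    (by nlinarith [mul_nonneg hτ.le hlam, mul_nonneg hτ.le hμ0]) (by nlinarith)
    (forall_mem_image.2 step)
  refine (hS x hx).trans (hsup.trans_eq ?_)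
  ring

/-- Uniform L∞ estimate for the semi-implicit time discretization: if `w_{j+1}` solves
`w_{j+1}(x) = w_j(x) + τ ∫_Ω K_h(e^{μ t_j}(w_j(y)−w_j(x)))(w_{j+1}(y)−w_{j+1}(x)) dy
+ τλ(w0(x)−w_{j+1}(x)) − τμ w_{j+1}(x)` with `μ > 2|Ω|·sup K_h`, then
`sup_Ω |w_{j+1}| ≤ (sup_Ω |w_j| + τλ sup_Ω |w0|)/(1 + τ(λ + μ − 2|Ω|·sup K_h))`. -/
theorem stmt_5
    (d : ℕ) (hd : 1 ≤ d)
    (Ω : Set (Fin d → ℝ)) (hΩopen : IsOpen Ω) (hΩbdd : Bornology.IsBounded Ω)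
    (K : ℝ → ℝ) (hKnonneg : ∀ ξ, 0 ≤ K ξ) (BK : ℝ) (hKbdd : ∀ ξ, K ξ ≤ BK)
    (LK : NNReal) (hKlip : LipschitzWith LK K)
    (h : ℝ) (hh : 0 < h)
    (w0 wj wj1 : (Fin d → ℝ) → ℝ)
    (hw0m : Measurable w0) (Mw0 : ℝ) (hw0b : ∀ x ∈ Ω, |w0 x| ≤ Mw0)
    (hwjm : Measurable wj) (Mwj : ℝ) (hwjb : ∀ x ∈ Ω, |wj x| ≤ Mwj)
    (hwj1m : Measurable wj1) (Mwj1 : ℝ) (hwj1b : ∀ x ∈ Ω, |wj1 x| ≤ Mwj1)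
    (τ : ℝ) (hτ : 0 < τ) (tj : ℝ) (htj : 0 ≤ tj) (lam : ℝ) (hlam : 0 ≤ lam)
    (SK : ℝ) (hSK : SK = ⨆ ξ : ℝ, K (ξ / h))
    (μ : ℝ) (hμ : 2 * (volume Ω).toReal * SK < μ)
    (heq : ∀ x ∈ Ω,
      wj1 x = wj x
        + τ * (∫ y in Ω, K ((Real.exp (μ * tj) * (wj y - wj x)) / h) * (wj1 y - wj1 x))
        + τ * lam * (w0 x - wj1 x) - τ * μ * wj1 x) :
    ∀ x ∈ Ω, |wj1 x| ≤
      (sSup ((fun x => |wj x|) '' Ω) + τ * lam * sSup ((fun x => |w0 x|) '' Ω)) /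
        (1 + τ * (lam + μ - 2 * (volume Ω).toReal * SK)) :=
  stmt_5_general d Ω hΩbdd K hKnonneg BK hKbdd h w0 wj wj1 Mw0 hw0b Mwj hwjb Mwj1 hwj1b τ hτ tj lam
    hlam SK hSK μ hμ heq
end

section
/- Explicit formula for the spatial derivative of solutions in one dimension: let Ω = (a,b) ⊂ ℝ, K be additionally continuously differentiable, u0 continuously differentiable, and let u : [0,T]×(a,b) → ℝ be a bounded solution of problem P((a,b),u0) such that u and ∂_x u are continuous on [0,T]×(a,b), ∂_x u(·,x) is differentiable in t for each x, and ∂_t ∂_x u = ∂_x ∂_t u. Define η(t,x) = ∫_a^b [ K'_h(u(t,y) − u(t,x))·(u(t,y) − u(t,x)) + K_h(u(t,y) − u(t,x)) ] dy and G(t,x) = exp( −∫_0^t (λ + η(τ,x)) dτ ). Then for every t ∈ [0,T] and x ∈ (a,b), ∂_x u(t,x) = u0'(x) · G(t,x) · ( 1 + λ ∫_0^t G(τ,x)^{-1} dτ ). -/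
open MeasureTheory Set
open Topology Filter

/-!
Differentiating the equation in `x` (under the integral sign) shows that, for fixed `x`,
`v = ∂ₓu(·, x)` solves the linear ODE `v' = -(λ + η(·, x)) v + λ u0'(x)` with `v(0) = u0'(x)`;
the formula is its solution by the integrating factor `G(·, x)⁻¹`.
-/

lemma Continuous.exists_bound_of_abs_le {ψ : ℝ → ℝ} (hψ : Continuous ψ) (M : ℝ) :
    ∃ C, ∀ δ, |δ| ≤ M → ‖ψ δ‖ ≤ C := by
  obtain ⟨C, hC⟩ := isCompact_Icc.exists_bound_of_continuousOn (hψ.continuousOn (s := Icc (-M) M))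
  exact ⟨C, fun δ hδ => hC δ (abs_le.1 hδ)⟩

section ParametricIntegral

variable {α : Type*} [MeasurableSpace α] {μ : Measure α} [IsFiniteMeasure μ]

theorem continuousOn_integral_comp_of_abs_le {X : Type*} [TopologicalSpace X]
    [FirstCountableTopology X] {ψ : ℝ → ℝ} (hψ : Continuous ψ) {F : X → α → ℝ} {S : Set X}
    {M : ℝ} (hF_meas : ∀ τ ∈ S, AEStronglyMeasurable (F τ) μ)
    (hF_bound : ∀ τ ∈ S, ∀ᵐ y ∂μ, |F τ y| ≤ M)
    (hF_cont : ∀ᵐ y ∂μ, ContinuousOn (fun τ => F τ y) S) :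
    ContinuousOn (fun τ => ∫ y, ψ (F τ y) ∂μ) S := by
  obtain ⟨C, hC⟩ := hψ.exists_bound_of_abs_le M
  refine continuousOn_of_dominated (bound := fun _ => C)
    (fun τ hτ => hψ.comp_aestronglyMeasurable (hF_meas τ hτ))
    (fun τ hτ => (hF_bound τ hτ).mono fun y hy => hC _ hy) (integrable_const C) ?_
  filter_upwards [hF_cont] with y hy using hψ.comp_continuousOn hy

theorem hasDerivAt_integral_comp_sub {φ φ' : ℝ → ℝ} (hφ : ∀ δ, HasDerivAt φ (φ' δ) δ)
    (hφ' : Continuous φ') {f : α → ℝ} (hf : AEStronglyMeasurable f μ) {M : ℝ}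
    (hfM : ∀ᵐ y ∂μ, |f y| ≤ M) {g g' : ℝ → ℝ} {x₀ : ℝ}
    (hg : ∀ᶠ z in 𝓝 x₀, HasDerivAt g (g' z) z ∧ |g z| ≤ M) (hg' : ContinuousAt g' x₀) :
    HasDerivAt (fun z => ∫ y, φ (f y - g z) ∂μ) ((∫ y, φ' (f y - g x₀) ∂μ) * -g' x₀) x₀ := by
  have hφc : Continuous φ := continuous_iff_continuousAt.2 fun δ => (hφ δ).continuousAt
  have hsub : ∀ y z, |f y| ≤ M → |g z| ≤ M → |f y - g z| ≤ 2 * M := fun y z hy hz => by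
    linarith [abs_sub (f y) (g z)]
  obtain ⟨C₀, hC₀⟩ := hφc.exists_bound_of_abs_le (2 * M)
  obtain ⟨C, hC⟩ := hφ'.exists_bound_of_abs_le (2 * M)
  have hg'_bound : ∀ᶠ z in 𝓝 x₀, ‖g' z‖ ≤ ‖g' x₀‖ + 1 :=
    hg'.norm.eventually (gt_mem_nhds (lt_add_one _)) |>.mono fun _ h => h.le
  obtain ⟨ε, hε, hball⟩ := Metric.eventually_nhds_iff_ball.1 (hg.and hg'_bound)
  have hmeas : ∀ c, AEStronglyMeasurable (fun y => f y - c) μ := fun c =>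
    hf.sub aestronglyMeasurable_const
  have hgx₀ := (hball x₀ (Metric.mem_ball_self hε)).1.2
  have key := hasDerivAt_integral_of_dominated_loc_of_deriv_le (μ := μ)
    (F := fun z y => φ (f y - g z)) (F' := fun z y => φ' (f y - g z) * -g' z)
    (bound := fun _ => C * (‖g' x₀‖ + 1)) (Metric.ball_mem_nhds x₀ hε)
    (Eventually.of_forall fun z => hφc.comp_aestronglyMeasurable (hmeas _))
    (Integrable.of_bound (hφc.comp_aestronglyMeasurable (hmeas _)) C₀
      (hfM.mono fun y hy => hC₀ _ (hsub y x₀ hy hgx₀)))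
    ((hφ'.comp_aestronglyMeasurable (hmeas _)).mul_const _) ?_ (integrable_const _) ?_
  · rw [integral_mul_const] at key
    exact key.2
  · filter_upwards [hfM] with y hy z hz
    obtain ⟨⟨-, hgz⟩, hg'z⟩ := hball z hz
    rw [norm_mul, norm_neg]
    exact mul_le_mul (hC _ (hsub y z hy hgz)) hg'z (norm_nonneg _)
      ((norm_nonneg _).trans (hC _ (hsub y z hy hgz)))
  · filter_upwards with y z hz
    exact (hφ _).comp z (((hball z hz).1.1).const_sub (f y))

end ParametricIntegral

theorem ContinuousOn.hasDerivWithinAt_integral_Icc {f : ℝ → ℝ} {a b s : ℝ}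
    (hf : ContinuousOn f (Icc a b)) (hs : s ∈ Icc a b) :
    HasDerivWithinAt (fun t => ∫ τ in a..t, f τ) (f s) (Icc a b) s := by
  have : Fact (s ∈ Icc a b) := ⟨hs⟩
  exact intervalIntegral.integral_hasDerivWithinAt_right
    ((hf.mono (Icc_subset_Icc le_rfl hs.2)).intervalIntegrable_of_Icc hs.1)
    (hf.stronglyMeasurableAtFilter_nhdsWithin measurableSet_Icc s) (hf.continuousWithinAt hs)

theorem mul_exp_integral_eq_of_hasDerivWithinAt {p v v' : ℝ → ℝ} {a b c : ℝ}
    (hp : ContinuousOn p (Icc a b))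
    (hv : ∀ s ∈ Icc a b, HasDerivWithinAt v (v' s) (Icc a b) s)
    (hode : ∀ s ∈ Icc a b, v' s = -p s * v s + c) :
    ∀ t ∈ Icc a b, v t * Real.exp (∫ τ in a..t, p τ)
      = v a + c * ∫ τ in a..t, Real.exp (∫ σ in a..τ, p σ) := by
  set E := fun t => ∫ τ in a..t, p τ
  have hE : ∀ s ∈ Icc a b, HasDerivWithinAt E (p s) (Icc a b) s := fun s hs =>
    hp.hasDerivWithinAt_integral_Icc hs
  have hlhs : ∀ s ∈ Icc a b,
      HasDerivWithinAt (fun t => v t * Real.exp (E t)) (c * Real.exp (E s)) (Icc a b) s :=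
    fun s hs => ((hv s hs).mul (hE s hs).exp).congr_deriv (by rw [hode s hs]; ring)
  have hrhs : ∀ s ∈ Icc a b, HasDerivWithinAt
      (fun t => v a + c * ∫ τ in a..t, Real.exp (E τ)) (c * Real.exp (E s)) (Icc a b) s :=
    fun s hs => (((Real.continuous_exp.comp_continuousOn fun s hs => (hE s hs).continuousWithinAt)
      |>.hasDerivWithinAt_integral_Icc hs).const_mul c).const_add _
  refine eq_of_has_deriv_right_eq
    (fun s hs => (hlhs s (Ico_subset_Icc_self hs)).mono_of_mem_nhdsWithin
      (Icc_mem_nhdsGE_of_mem hs))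
    (fun s hs => (hrhs s (Ico_subset_Icc_self hs)).mono_of_mem_nhdsWithin
      (Icc_mem_nhdsGE_of_mem hs))
    (fun s hs => (hlhs s hs).continuousWithinAt) (fun s hs => (hrhs s hs).continuousWithinAt) ?_
  simp

lemma hasDerivAt_mul_comp_div {K K' : ℝ → ℝ} (hK : ∀ ξ, HasDerivAt K (K' ξ) ξ) (h δ : ℝ) :
    HasDerivAt (fun δ => K (δ / h) * δ) (K' (δ / h) / h * δ + K (δ / h)) δ :=
  (((hK _).comp δ ((hasDerivAt_id δ).div_const h)).mul (hasDerivAt_id δ)).congr_deriv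
    (by simp only [Function.comp_apply, id_eq, mul_one]; ring)

theorem stmt_6_general
    (a b : ℝ)
    (K K' : ℝ → ℝ)
    (hKderiv : ∀ ξ, HasDerivAt K (K' ξ) ξ) (hK'cont : Continuous K')
    (h : ℝ) (lam : ℝ) (T : ℝ)
    (u0 u0' : ℝ → ℝ) (hu0deriv : ∀ x, HasDerivAt u0 (u0' x) x)
    (u ux ut utx : ℝ → ℝ → ℝ)
    (humeas : ∀ t ∈ Icc (0:ℝ) T, Measurable (u t))
    (M : ℝ) (hubdd : ∀ t ∈ Icc (0:ℝ) T, ∀ x ∈ Ioo a b, |u t x| ≤ M)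
    (hinit : ∀ x ∈ Ioo a b, u 0 x = u0 x)
    (hut : ∀ t ∈ Icc (0:ℝ) T, ∀ x ∈ Ioo a b,
      ut t x = (∫ y in Ioo a b, K ((u t y - u t x) / h) * (u t y - u t x))
        + lam * (u0 x - u t x))
    -- ∂_x u = ux, with u and ∂_x u continuous on [0,T]×(a,b)
    (hux : ∀ t ∈ Icc (0:ℝ) T, ∀ x ∈ Ioo a b, HasDerivAt (fun z => u t z) (ux t x) x)
    (hucont : ContinuousOn (fun p : ℝ × ℝ => u p.1 p.2) (Icc 0 T ×ˢ Ioo a b))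
    (huxcont : ContinuousOn (fun p : ℝ × ℝ => ux p.1 p.2) (Icc 0 T ×ˢ Ioo a b))
    -- commuting mixed partials: ∂_t ∂_x u = utx = ∂_x ∂_t u
    (hmix1 : ∀ t ∈ Icc (0:ℝ) T, ∀ x ∈ Ioo a b,
      HasDerivWithinAt (fun τ => ux τ x) (utx t x) (Icc 0 T) t)
    (hmix2 : ∀ t ∈ Icc (0:ℝ) T, ∀ x ∈ Ioo a b,
      HasDerivAt (fun z => ut t z) (utx t x) x)
    -- η and G
    (η G : ℝ → ℝ → ℝ)
    (hη : ∀ t x, η t x = ∫ y in Ioo a b,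
      (K' ((u t y - u t x) / h) / h * (u t y - u t x) + K ((u t y - u t x) / h)))
    (hG : ∀ t x, G t x = Real.exp (-(∫ τ in (0:ℝ)..t, (lam + η τ x)))) :
    ∀ t ∈ Icc (0:ℝ) T, ∀ x ∈ Ioo a b,
      ux t x = u0' x * G t x * (1 + lam * ∫ τ in (0:ℝ)..t, (G τ x)⁻¹) := by
  intro t ht x hx
  have hK : Continuous K := continuous_iff_continuousAt.2 fun ξ => (hKderiv ξ).continuousAt
  have hflux' : Continuous fun δ => K' (δ / h) / h * δ + K (δ / h) := by fun_prop
  have hη_cont : ContinuousOn (fun τ => η τ x) (Icc 0 T) := by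
    simp only [hη]
    refine continuousOn_integral_comp_of_abs_le hflux' (M := 2 * M)
      (fun τ hτ => ((humeas τ hτ).sub_const _).aestronglyMeasurable)
      (fun τ hτ => ae_restrict_of_forall_mem measurableSet_Ioo fun y hy => ?_)
      (ae_restrict_of_forall_mem measurableSet_Ioo fun y hy => ?_)
    · linarith [abs_sub (u τ y) (u τ x), hubdd τ hτ y hy, hubdd τ hτ x hx]
    · have hu_time : ∀ z ∈ Ioo a b, ContinuousOn (fun τ => u τ z) (Icc 0 T) := fun z hz =>
        hucont.comp (continuous_id.prodMk continuous_const).continuousOn fun τ hτ => ⟨hτ, hz⟩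
      exact (hu_time y hy).sub (hu_time x hx)
  have hode : ∀ τ ∈ Icc 0 T, utx τ x = -(lam + η τ x) * ux τ x + lam * u0' x := by
    intro τ hτ
    have hux_cont : ContinuousAt (ux τ) x :=
      (huxcont.comp (continuous_const.prodMk continuous_id).continuousOn
        fun z hz => ⟨hτ, hz⟩).continuousAt (isOpen_Ioo.mem_nhds hx)
    have hflux := hasDerivAt_integral_comp_sub (μ := volume.restrict (Ioo a b))
      (hasDerivAt_mul_comp_div hKderiv h) hflux' (humeas τ hτ).aestronglyMeasurable
      (ae_restrict_of_forall_mem measurableSet_Ioo (hubdd τ hτ)) (g := u τ)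
      (eventually_of_mem (isOpen_Ioo.mem_nhds hx) fun z hz => ⟨hux τ hτ z hz, hubdd τ hτ z hz⟩)
      hux_cont
    have hrhs := hflux.add (((hu0deriv x).sub (hux τ hτ x hx)).const_mul lam)
    have hut_near : ∀ᶠ z in 𝓝 x, ut τ z = _ :=
      eventually_of_mem (isOpen_Ioo.mem_nhds hx) (hut τ hτ)
    rw [(hmix2 τ hτ x hx).unique (hrhs.congr_of_eventuallyEq hut_near), hη]
    ring
  have hux₀ : ux 0 x = u0' x := by
    refine ((hux 0 ⟨le_rfl, ht.1.trans ht.2⟩ x hx).congr_of_eventuallyEq ?_).unique (hu0deriv x)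
    exact eventually_of_mem (isOpen_Ioo.mem_nhds hx) fun z hz => (hinit z hz).symm
  have hsol := mul_exp_integral_eq_of_hasDerivWithinAt (continuousOn_const.add hη_cont)
    (fun s hs => hmix1 s hs x hx) hode t ht
  simp only [hG, Real.exp_neg, inv_inv]
  rw [hux₀] at hsol
  field_simp
  linear_combination hsol

/-- Explicit formula for the spatial derivative of solutions in one dimension:
if `u` solves P((a,b),u0) with `K, u0 ∈ C¹`, `∂_x u` continuous and commuting mixed
partials, then
`∂_x u(t,x) = u0'(x) · G(t,x) · (1 + λ ∫_0^t G(τ,x)⁻¹ dτ)` where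
`η(t,x) = ∫_a^b [K'_h(u(t,y)−u(t,x))(u(t,y)−u(t,x)) + K_h(u(t,y)−u(t,x))] dy` and
`G(t,x) = exp(−∫_0^t (λ + η(τ,x)) dτ)`. -/
theorem stmt_6
    (a b : ℝ) (hab : a < b)
    (K K' : ℝ → ℝ) (hKnonneg : ∀ ξ, 0 ≤ K ξ) (BK : ℝ) (hKbdd : ∀ ξ, K ξ ≤ BK)
    (LK : NNReal) (hKlip : LipschitzWith LK K)
    (hKderiv : ∀ ξ, HasDerivAt K (K' ξ) ξ) (hK'cont : Continuous K')
    (BK' : ℝ) (hK'bdd : ∀ ξ, |K' ξ| ≤ BK')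
    (h : ℝ) (hh : 0 < h) (lam : ℝ) (hlam : 0 ≤ lam) (T : ℝ) (hT : 0 < T)
    (u0 u0' : ℝ → ℝ) (hu0deriv : ∀ x, HasDerivAt u0 (u0' x) x) (hu0'cont : Continuous u0')
    (u ux ut utx : ℝ → ℝ → ℝ)
    (humeas : ∀ t ∈ Icc (0:ℝ) T, Measurable (u t))
    (M : ℝ) (hubdd : ∀ t ∈ Icc (0:ℝ) T, ∀ x ∈ Ioo a b, |u t x| ≤ M)
    (hinit : ∀ x ∈ Ioo a b, u 0 x = u0 x)
    -- u solves the equation: ∂_t u = ut with the integro-differential right-hand side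
    (hsol : ∀ t ∈ Icc (0:ℝ) T, ∀ x ∈ Ioo a b,
      HasDerivWithinAt (fun τ => u τ x) (ut t x) (Icc 0 T) t)
    (hut : ∀ t ∈ Icc (0:ℝ) T, ∀ x ∈ Ioo a b,
      ut t x = (∫ y in Ioo a b, K ((u t y - u t x) / h) * (u t y - u t x))
        + lam * (u0 x - u t x))
    -- ∂_x u = ux, with u and ∂_x u continuous on [0,T]×(a,b)
    (hux : ∀ t ∈ Icc (0:ℝ) T, ∀ x ∈ Ioo a b, HasDerivAt (fun z => u t z) (ux t x) x)
    (hucont : ContinuousOn (fun p : ℝ × ℝ => u p.1 p.2) (Icc 0 T ×ˢ Ioo a b))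
    (huxcont : ContinuousOn (fun p : ℝ × ℝ => ux p.1 p.2) (Icc 0 T ×ˢ Ioo a b))
    -- commuting mixed partials: ∂_t ∂_x u = utx = ∂_x ∂_t u
    (hmix1 : ∀ t ∈ Icc (0:ℝ) T, ∀ x ∈ Ioo a b,
      HasDerivWithinAt (fun τ => ux τ x) (utx t x) (Icc 0 T) t)
    (hmix2 : ∀ t ∈ Icc (0:ℝ) T, ∀ x ∈ Ioo a b,
      HasDerivAt (fun z => ut t z) (utx t x) x)
    -- η and G
    (η G : ℝ → ℝ → ℝ)
    (hη : ∀ t x, η t x = ∫ y in Ioo a b,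
      (K' ((u t y - u t x) / h) / h * (u t y - u t x) + K ((u t y - u t x) / h)))
    (hG : ∀ t x, G t x = Real.exp (-(∫ τ in (0:ℝ)..t, (lam + η τ x)))) :
    ∀ t ∈ Icc (0:ℝ) T, ∀ x ∈ Ioo a b,
      ux t x = u0' x * G t x * (1 + lam * ∫ τ in (0:ℝ)..t, (G τ x)⁻¹) :=
  stmt_6_general a b K K' hKderiv hK'cont h lam T u0 u0' hu0deriv u ux ut utx humeas M hubdd hinit
    hut hux hucont huxcont hmix1 hmix2 η G hη hG
end

section
/- Boundary monotonicity (Corollary 3.2, point 2): let v : [0,T]×[0,L] → ℝ be a bounded solution of problem P((0,L),v0) whose equation holds for all s ∈ [0,L] including the endpoints, and suppose v(t,·) is nonincreasing on [0,L] for every t ∈ [0,T]. Then for every t ∈ [0,T], v(t,0) ≤ v0(0) and v(t,L) ≥ v0(L). -/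
open MeasureTheory Set

/- At the left endpoint every other particle lies below `v(t,0)`, so the interaction integral
pulls `v(t,0)` down and only the relaxation term `λ (v0(0) - v(t,0))` remains; a Grönwall
comparison then keeps `v(t,0)` below its initial value `v0(0)`. The right endpoint is symmetric. -/

section Comparison

variable {u u' : ℝ → ℝ} {a b lam c : ℝ}

theorem le_of_hasDerivWithinAt_le_mul_sub
    (hu : ∀ t ∈ Icc a b, HasDerivWithinAt u (u' t) (Icc a b) t)
    (hbound : ∀ t ∈ Icc a b, u' t ≤ lam * (c - u t)) (ha : u a ≤ c) :
    ∀ t ∈ Icc a b, u t ≤ c := by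
  have hright : ∀ t ∈ Ico a b, HasDerivWithinAt u (u' t) (Ici t) t := fun t ht =>
    ((hu t (Ico_subset_Icc_self ht)).mono (Icc_subset_Icc_left ht.1)).mono_of_mem_nhdsWithin
      (Icc_mem_nhdsGE ht.2)
  have hgron := le_gronwallBound_of_liminf_deriv_right_le (f := fun t => u t - c) (δ := 0)
    (K := -lam) (ε := 0) (fun t ht => ((hu t ht).sub_const c).continuousWithinAt)
    (fun t ht _ hr => ((hright t ht).sub_const c).liminf_right_slope_le hr) (by linarith)
    (fun t ht => by linarith [hbound t (Ico_subset_Icc_self ht)])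
  intro t ht
  linarith [gronwallBound_ε0_δ0 (-lam) (t - a), hgron t ht]

theorem le_of_hasDerivWithinAt_ge_mul_sub
    (hu : ∀ t ∈ Icc a b, HasDerivWithinAt u (u' t) (Icc a b) t)
    (hbound : ∀ t ∈ Icc a b, lam * (c - u t) ≤ u' t) (ha : c ≤ u a) :
    ∀ t ∈ Icc a b, c ≤ u t := by
  have := le_of_hasDerivWithinAt_le_mul_sub (u := fun t => -u t) (c := -c) (lam := lam)
    (fun t ht => (hu t ht).neg) (fun t ht => by linarith [hbound t ht]) (neg_le_neg ha)
  exact fun t ht => neg_le_neg_iff.mp (this t ht)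

end Comparison

section Interaction

variable {g f : ℝ → ℝ} {a b y : ℝ}

theorem intervalIntegral_mul_sub_nonneg (hab : a ≤ b) (hg : ∀ σ ∈ Icc a b, 0 ≤ g σ)
    (hf : ∀ σ ∈ Icc a b, y ≤ f σ) : 0 ≤ ∫ σ in a..b, g σ * (f σ - y) :=
  intervalIntegral.integral_nonneg hab fun σ hσ =>
    mul_nonneg (hg σ hσ) (sub_nonneg.2 (hf σ hσ))

theorem intervalIntegral_mul_sub_nonpos (hab : a ≤ b) (hg : ∀ σ ∈ Icc a b, 0 ≤ g σ)
    (hf : ∀ σ ∈ Icc a b, f σ ≤ y) : ∫ σ in a..b, g σ * (f σ - y) ≤ 0 := by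
  have hneg : 0 ≤ ∫ σ in a..b, g σ * (y - f σ) :=
    intervalIntegral.integral_nonneg hab fun σ hσ =>
      mul_nonneg (hg σ hσ) (sub_nonneg.2 (hf σ hσ))
  have hflip : ∫ σ in a..b, g σ * (f σ - y) = -∫ σ in a..b, g σ * (y - f σ) := by
    rw [← intervalIntegral.integral_neg]
    congr 1 with σ
    ring
  linarith

end Interaction

theorem stmt_8_general
    (L : ℝ) (hL : 0 < L)
    (K : ℝ → ℝ) (hKnonneg : ∀ ξ, 0 ≤ K ξ)
    (h : ℝ) (lam : ℝ) (T : ℝ)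
    (v0 : ℝ → ℝ)
    (v : ℝ → ℝ → ℝ)
    (hinit : ∀ s ∈ Icc (0:ℝ) L, v 0 s = v0 s)
    (hsol : ∀ t ∈ Icc (0:ℝ) T, ∀ s ∈ Icc (0:ℝ) L,
      HasDerivWithinAt (fun τ => v τ s)
        ((∫ σ in (0:ℝ)..L, K ((v t σ - v t s) / h) * (v t σ - v t s))
          + lam * (v0 s - v t s)) (Icc 0 T) t)
    (hvmono : ∀ t ∈ Icc (0:ℝ) T, ∀ s1 ∈ Icc (0:ℝ) L, ∀ s2 ∈ Icc (0:ℝ) L,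
      s1 ≤ s2 → v t s2 ≤ v t s1) :
    ∀ t ∈ Icc (0:ℝ) T, v t 0 ≤ v0 0 ∧ v0 L ≤ v t L := by
  have h0 : (0:ℝ) ∈ Icc (0:ℝ) L := left_mem_Icc.2 hL.le
  have hL' : L ∈ Icc (0:ℝ) L := right_mem_Icc.2 hL.le
  intro t ht
  constructor
  · refine le_of_hasDerivWithinAt_le_mul_sub (lam := lam) (fun τ hτ => hsol τ hτ 0 h0)
      (fun τ hτ => ?_) (hinit 0 h0).le t ht
    have := intervalIntegral_mul_sub_nonpos hL.le (fun σ _ => hKnonneg ((v τ σ - v τ 0) / h))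
      fun σ hσ => hvmono τ hτ 0 h0 σ hσ hσ.1
    linarith
  · refine le_of_hasDerivWithinAt_ge_mul_sub (lam := lam) (fun τ hτ => hsol τ hτ L hL')
      (fun τ hτ => ?_) (hinit L hL').ge t ht
    have := intervalIntegral_mul_sub_nonneg hL.le (fun σ _ => hKnonneg ((v τ σ - v τ L) / h))
      fun σ hσ => hvmono τ hτ σ hσ L hL' hσ.2
    linarith

/-- Boundary monotonicity (Corollary 3.2, point 2): if `v` is a bounded solution of
P((0,L),v0) whose equation holds on all of `[0,L]` including the endpoints, and
`v(t,·)` is nonincreasing on `[0,L]` for every `t ∈ [0,T]`, then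
`v(t,0) ≤ v0(0)` and `v(t,L) ≥ v0(L)` for every `t ∈ [0,T]`. -/
theorem stmt_8
    (L : ℝ) (hL : 0 < L)
    (K : ℝ → ℝ) (hKnonneg : ∀ ξ, 0 ≤ K ξ) (BK : ℝ) (hKbdd : ∀ ξ, K ξ ≤ BK)
    (LK : NNReal) (hKlip : LipschitzWith LK K)
    (h : ℝ) (hh : 0 < h) (lam : ℝ) (hlam : 0 ≤ lam) (T : ℝ) (hT : 0 < T)
    (v0 : ℝ → ℝ) (hv0m : Measurable v0) (M0 : ℝ) (hv0b : ∀ s ∈ Icc (0:ℝ) L, |v0 s| ≤ M0)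
    (hv0mono : ∀ s1 ∈ Icc (0:ℝ) L, ∀ s2 ∈ Icc (0:ℝ) L, s1 ≤ s2 → v0 s2 ≤ v0 s1)
    (v : ℝ → ℝ → ℝ)
    (hvmeas : ∀ t ∈ Icc (0:ℝ) T, Measurable (v t))
    (M : ℝ) (hvbdd : ∀ t ∈ Icc (0:ℝ) T, ∀ s ∈ Icc (0:ℝ) L, |v t s| ≤ M)
    (hinit : ∀ s ∈ Icc (0:ℝ) L, v 0 s = v0 s)
    (hsol : ∀ t ∈ Icc (0:ℝ) T, ∀ s ∈ Icc (0:ℝ) L,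
      HasDerivWithinAt (fun τ => v τ s)
        ((∫ σ in (0:ℝ)..L, K ((v t σ - v t s) / h) * (v t σ - v t s))
          + lam * (v0 s - v t s)) (Icc 0 T) t)
    (hvmono : ∀ t ∈ Icc (0:ℝ) T, ∀ s1 ∈ Icc (0:ℝ) L, ∀ s2 ∈ Icc (0:ℝ) L,
      s1 ≤ s2 → v t s2 ≤ v t s1) :
    ∀ t ∈ Icc (0:ℝ) T, v t 0 ≤ v0 0 ∧ v0 L ≤ v t L :=
  stmt_8_general L hL K hKnonneg h lam T v0 v hinit hsol hvmono
end

section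
/- Mass conservation (Corollary 3.2, point 3): let v be a bounded solution of problem P((0,L),v0) such that ∂_t v is bounded on [0,T]×(0,L) and (t,s) ↦ v(t,s) is jointly measurable, and suppose the map ξ ↦ K_h(ξ)·ξ is odd (for instance, K is an even function, as is the Gaussian kernel). Then for every t ∈ [0,T], ∫_0^L v(t,s) ds = ∫_0^L v0(s) ds. -/
/-!
Integrating the equation in `s`, the interaction term becomes
`∫∫ K_h(v σ - v s) (v σ - v s) dσ ds`, which vanishes by Fubini since its integrand is
antisymmetric in `(s, σ)`. Hence the mass `m t = ∫ v(t, s) ds` satisfies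
`m t - m 0 = -λ ∫_0^t (m τ - m 0) dτ`, and uniqueness for the linear ODE `y' = -λ y`, `y 0 = 0`,
forces `m t = m 0`.
-/

open MeasureTheory Set Function

theorem intervalIntegral.integral_eq_sub_of_hasDerivWithinAt_Icc {E : Type*}
    [NormedAddCommGroup E] [NormedSpace ℝ E] [CompleteSpace E] {f f' : ℝ → E} {a b : ℝ}
    (hab : a ≤ b) (hf : ∀ x ∈ Icc a b, HasDerivWithinAt f (f' x) (Icc a b) x)
    (hint : IntervalIntegrable f' volume a b) : ∫ x in a..b, f' x = f b - f a :=
  integral_eq_sub_of_hasDeriv_right_of_le hab (fun x hx => (hf x hx).continuousWithinAt)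
    (fun x hx => ((hf x (Ioo_subset_Icc_self hx)).hasDerivAt
      (Icc_mem_nhds hx.1 hx.2)).hasDerivWithinAt) hint

theorem eqOn_zero_of_eq_mul_integral {w : ℝ → ℝ} {c T : ℝ} (hw : IntegrableOn w (Icc 0 T))
    (heq : ∀ t ∈ Icc 0 T, w t = c * ∫ τ in 0..t, w τ) : EqOn w 0 (Icc 0 T) := by
  intro t ht
  have hT : 0 ≤ T := ht.1.trans ht.2
  let P : ℝ → ℝ := fun t => ∫ τ in 0..t, w τ
  have hP : ContinuousOn P (Icc 0 T) := by
    simpa only [uIcc_of_le hT] using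
      intervalIntegral.continuousOn_primitive_interval (a := 0) (b := T) (by rwa [uIcc_of_le hT])
  have hwc : ContinuousOn w (Icc 0 T) := (hP.const_smul c).congr heq
  have hPderiv : ∀ τ ∈ Ico 0 T, HasDerivWithinAt P (c * P τ) (Ici τ) τ := by
    intro τ hτ
    have hτ' : Fact (τ ∈ Icc 0 T) := ⟨Ico_subset_Icc_self hτ⟩
    have hd := intervalIntegral.integral_hasDerivWithinAt_right (s := Icc 0 T) (t := Icc 0 T)
      ((intervalIntegrable_iff_integrableOn_Icc_of_le hτ.1).2
        (hw.mono_set (Icc_subset_Icc_right hτ.2.le)))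
      (hwc.stronglyMeasurableAtFilter_nhdsWithin measurableSet_Icc τ) (hwc τ hτ'.out)
    rw [heq τ hτ'.out] at hd
    exact hd.mono_of_mem_nhdsWithin
      (Filter.mem_of_superset (Icc_mem_nhdsGE hτ.2) (Icc_subset_Icc_left hτ.1))
  have hP0 : EqOn P 0 (Icc 0 T) :=
    ODE_solution_unique (v := fun _ x => c * x) (fun _ => lipschitzWith_smul c) hP hPderiv
      continuousOn_const
      (fun τ _ => by simpa using hasDerivWithinAt_zero (𝕜 := ℝ) (F := ℝ) τ (Ici τ))
      (by simp [P])
  rw [heq t ht, Pi.zero_apply]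
  exact mul_eq_zero_of_right c (hP0 ht)

section

variable {α : Type*} [MeasurableSpace α] {μ : Measure α}

theorem integral_integral_eq_zero_of_antisymm [SFinite μ] {f : α → α → ℝ}
    (hf : Integrable (uncurry f) (μ.prod μ)) (hanti : ∀ x y, f y x = -f x y) :
    ∫ x, ∫ y, f x y ∂μ ∂μ = 0 := by
  have hswap := integral_integral_swap hf
  have hneg : ∫ y, ∫ x, f x y ∂μ ∂μ = -∫ y, ∫ x, f y x ∂μ ∂μ := by
    simp only [← integral_neg, ← hanti]
  linarith

theorem integrable_comp_sub_of_bounded [IsFiniteMeasure μ] {G : ℝ → ℝ} (hG : Continuous G)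
    {u : α → ℝ} (hu : Measurable u) {M : ℝ} (huM : ∀ᵐ x ∂μ, |u x| ≤ M) :
    Integrable (uncurry fun x y => G (u y - u x)) (μ.prod μ) := by
  obtain ⟨C, hC⟩ := (isCompact_Icc (a := -(2 * M)) (b := 2 * M)).exists_bound_of_continuousOn
    hG.continuousOn
  refine Integrable.of_bound
    (hG.measurable.comp ((hu.comp measurable_snd).sub (hu.comp measurable_fst))).aestronglyMeasurable
    C ?_
  filter_upwards [Measure.quasiMeasurePreserving_fst.ae huM,
    Measure.quasiMeasurePreserving_snd.ae huM] with p h1 h2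
  exact hC _ (abs_le.1 ((abs_sub _ _).trans (by linarith)))

/-- With `μ` the Lebesgue measure on `(0, L)`, `G ξ = K_h(ξ) ξ` and `c = λ`, this is the
right-hand side of problem P at the state `u`. -/
noncomputable def nonlocalDrift (μ : Measure α) (G : ℝ → ℝ) (c : ℝ) (u₀ u : α → ℝ) (x : α) : ℝ :=
  (∫ y, G (u y - u x) ∂μ) + c * (u₀ x - u x)

theorem measurable_uncurry_nonlocalDrift [SFinite μ] {G : ℝ → ℝ} (hG : Measurable G) (c : ℝ)
    {u₀ : α → ℝ} (hu₀ : Measurable u₀) {v : ℝ → α → ℝ} (hv : Measurable (uncurry v)) :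
    Measurable (uncurry fun τ => nonlocalDrift μ G c u₀ (v τ)) := by
  have hinteraction : Measurable fun q : (ℝ × α) × α => G (v q.1.1 q.2 - v q.1.1 q.1.2) :=
    hG.comp ((hv.comp (measurable_fst.fst.prodMk measurable_snd)).sub (hv.comp measurable_fst))
  exact hinteraction.stronglyMeasurable.integral_prod_right'.measurable.add
    (measurable_const.mul ((hu₀.comp measurable_snd).sub hv))

theorem integral_nonlocalDrift [IsFiniteMeasure μ] {G : ℝ → ℝ} (hG : Continuous G)
    (hodd : ∀ ξ, G (-ξ) = -G ξ) (c : ℝ) {u₀ u : α → ℝ} (hu₀ : Integrable u₀ μ)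
    (hu : Measurable u) {M : ℝ} (huM : ∀ᵐ x ∂μ, |u x| ≤ M) :
    ∫ x, nonlocalDrift μ G c u₀ u x ∂μ = c * (∫ x, u₀ x ∂μ - ∫ x, u x ∂μ) := by
  have hui : Integrable u μ := Integrable.of_bound hu.aestronglyMeasurable M (by simpa using huM)
  have hinteraction : Integrable (fun x => ∫ y, G (u y - u x) ∂μ) μ :=
    (integrable_comp_sub_of_bounded hG hu huM).integral_prod_left
  have hrelaxation : Integrable (fun x => c * (u₀ x - u x)) μ := (hu₀.sub hui).const_mul c
  have hvanish : ∫ x, ∫ y, G (u y - u x) ∂μ ∂μ = 0 :=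
    integral_integral_eq_zero_of_antisymm (integrable_comp_sub_of_bounded hG hu huM)
      fun x y => by rw [← hodd, neg_sub]
  unfold nonlocalDrift
  rw [integral_add hinteraction hrelaxation, hvanish, zero_add,
    integral_const_mul, integral_sub hu₀ hui]

theorem integral_sub_integral_eq_integral_of_hasDerivWithinAt [IsFiniteMeasure μ]
    {v F : ℝ → α → ℝ} {T B t : ℝ} (hF : Measurable (uncurry F))
    (hv : ∀ τ ∈ Icc 0 T, Integrable (v τ) μ)
    (hderiv : ∀ᵐ x ∂μ, ∀ τ ∈ Icc 0 T, HasDerivWithinAt (v · x) (F τ x) (Icc 0 T) τ)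
    (hFB : ∀ᵐ x ∂μ, ∀ τ ∈ Icc 0 T, |F τ x| ≤ B) (ht : t ∈ Icc 0 T) :
    ∫ x, v t x ∂μ - ∫ x, v 0 x ∂μ = ∫ τ in 0..t, ∫ x, F τ x ∂μ := by
  have hFint : Integrable (uncurry fun x τ => F τ x) (μ.prod (volume.restrict (Ioc 0 t))) := by
    refine Integrable.of_bound (hF.comp measurable_swap).aestronglyMeasurable B ?_
    filter_upwards [Measure.quasiMeasurePreserving_fst.ae hFB,
      Measure.quasiMeasurePreserving_snd.ae (ae_restrict_mem measurableSet_Ioc)] with p hp hτ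
    exact hp p.2 ⟨hτ.1.le, hτ.2.trans ht.2⟩
  calc ∫ x, v t x ∂μ - ∫ x, v 0 x ∂μ = ∫ x, (v t x - v 0 x) ∂μ :=
        (integral_sub (hv t ht) (hv 0 ⟨le_rfl, ht.1.trans ht.2⟩)).symm
    _ = ∫ x, (∫ τ in Ioc 0 t, F τ x) ∂μ := by
        refine integral_congr_ae ?_
        filter_upwards [hderiv, hFint.prod_right_ae] with x hx hxint
        rw [← intervalIntegral.integral_of_le ht.1,
          intervalIntegral.integral_eq_sub_of_hasDerivWithinAt_Icc ht.1
            (fun τ hτ => (hx τ ⟨hτ.1, hτ.2.trans ht.2⟩).mono (Icc_subset_Icc_right ht.2))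
            ((intervalIntegrable_iff_integrableOn_Ioc_of_le ht.1).2 hxint)]
    _ = ∫ τ in Ioc 0 t, ∫ x, F τ x ∂μ := integral_integral_swap hFint
    _ = ∫ τ in 0..t, ∫ x, F τ x ∂μ := (intervalIntegral.integral_of_le ht.1).symm

theorem integral_eq_integral_zero_of_hasDerivWithinAt_nonlocalDrift [IsFiniteMeasure μ]
    {G : ℝ → ℝ} (hG : Continuous G) (hodd : ∀ ξ, G (-ξ) = -G ξ) (c : ℝ) {v : ℝ → α → ℝ}
    {T M B : ℝ} (hv : Measurable (uncurry v)) (hvM : ∀ τ ∈ Icc 0 T, ∀ᵐ x ∂μ, |v τ x| ≤ M)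
    (hderiv : ∀ᵐ x ∂μ, ∀ τ ∈ Icc 0 T,
      HasDerivWithinAt (v · x) (nonlocalDrift μ G c (v 0) (v τ) x) (Icc 0 T) τ)
    (hB : ∀ᵐ x ∂μ, ∀ τ ∈ Icc 0 T, |nonlocalDrift μ G c (v 0) (v τ) x| ≤ B) :
    ∀ t ∈ Icc 0 T, ∫ x, v t x ∂μ = ∫ x, v 0 x ∂μ := by
  intro t ht
  have h0 : (0 : ℝ) ∈ Icc 0 T := ⟨le_rfl, ht.1.trans ht.2⟩
  have hvτ (τ : ℝ) : Measurable (v τ) := hv.comp measurable_prodMk_left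
  have hvint : ∀ τ ∈ Icc 0 T, Integrable (v τ) μ := fun τ hτ =>
    Integrable.of_bound (hvτ τ).aestronglyMeasurable M (by simpa using hvM τ hτ)
  let m : ℝ → ℝ := fun τ => ∫ x, v τ x ∂μ
  have hmass : ∀ τ ∈ Icc 0 T, m τ - m 0 = -c * ∫ σ in 0..τ, (m σ - m 0) := by
    intro τ hτ
    rw [integral_sub_integral_eq_integral_of_hasDerivWithinAt
      (measurable_uncurry_nonlocalDrift hG.measurable c (hvτ 0) hv) hvint hderiv hB hτ,
      ← intervalIntegral.integral_const_mul]
    refine intervalIntegral.integral_congr fun σ hσ => ?_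
    rw [uIcc_of_le hτ.1] at hσ
    rw [integral_nonlocalDrift hG hodd c (hvint 0 h0) (hvτ σ) (hvM σ ⟨hσ.1, hσ.2.trans hτ.2⟩)]
    ring
  have hmint : IntegrableOn (fun τ => m τ - m 0) (Icc 0 T) := by
    have hm : Measurable m := (hv.stronglyMeasurable.integral_prod_right' (ν := μ)).measurable
    have hmM : ∀ τ ∈ Icc 0 T, ‖m τ‖ ≤ M * μ.real univ := fun τ hτ =>
      norm_integral_le_of_norm_le_const (by simpa using hvM τ hτ)
    refine Integrable.of_bound (hm.sub measurable_const).aestronglyMeasurable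
      (2 * (M * μ.real univ)) (ae_restrict_of_forall_mem measurableSet_Icc fun τ hτ => ?_)
    exact (norm_sub_le _ _).trans (by linarith [hmM τ hτ, hmM 0 h0])
  exact sub_eq_zero.1 (eqOn_zero_of_eq_mul_integral hmint hmass ht)

end

theorem stmt_9_general
    (L : ℝ) (hL : 0 < L)
    (K : ℝ → ℝ)
    (LK : NNReal) (hKlip : LipschitzWith LK K)
    (h : ℝ) (lam : ℝ) (T : ℝ)
    (hodd : ∀ ξ : ℝ, K (-ξ / h) * (-ξ) = -(K (ξ / h) * ξ))
    (v0 : ℝ → ℝ)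
    (v vt : ℝ → ℝ → ℝ)
    (hvjoint : Measurable (Function.uncurry v))
    (M : ℝ) (hvbdd : ∀ t ∈ Icc (0:ℝ) T, ∀ s ∈ Ioo (0:ℝ) L, |v t s| ≤ M)
    (hinit : ∀ s ∈ Ioo (0:ℝ) L, v 0 s = v0 s)
    (hsol : ∀ t ∈ Icc (0:ℝ) T, ∀ s ∈ Ioo (0:ℝ) L,
      HasDerivWithinAt (fun τ => v τ s) (vt t s) (Icc 0 T) t)
    (hvt : ∀ t ∈ Icc (0:ℝ) T, ∀ s ∈ Ioo (0:ℝ) L,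
      vt t s = (∫ σ in (0:ℝ)..L, K ((v t σ - v t s) / h) * (v t σ - v t s))
        + lam * (v0 s - v t s))
    (B : ℝ) (hvtbdd : ∀ t ∈ Icc (0:ℝ) T, ∀ s ∈ Ioo (0:ℝ) L, |vt t s| ≤ B) :
    ∀ t ∈ Icc (0:ℝ) T, ∫ s in (0:ℝ)..L, v t s = ∫ s in (0:ℝ)..L, v0 s := by
  intro t ht
  have hIoo (f : ℝ → ℝ) : ∫ s in (0:ℝ)..L, f s = ∫ s in Ioo 0 L, f s := by
    rw [intervalIntegral.integral_of_le hL.le, integral_Ioc_eq_integral_Ioo]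
  have hG : Continuous fun ξ => K (ξ / h) * ξ :=
    (hKlip.continuous.comp (continuous_id.div_const h)).mul continuous_id
  have hdrift : ∀ τ ∈ Icc 0 T, ∀ s ∈ Ioo 0 L, vt τ s =
      nonlocalDrift (volume.restrict (Ioo 0 L)) (fun ξ => K (ξ / h) * ξ) lam (v 0) (v τ) s :=
    fun τ hτ s hs => by rw [hvt τ hτ s hs, hIoo, ← hinit s hs, nonlocalDrift]
  have hconserved := integral_eq_integral_zero_of_hasDerivWithinAt_nonlocalDrift hG hodd lam
    hvjoint (fun τ hτ => ae_restrict_of_forall_mem measurableSet_Ioo (hvbdd τ hτ))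
    (ae_restrict_of_forall_mem measurableSet_Ioo fun s hs τ hτ =>
      hdrift τ hτ s hs ▸ hsol τ hτ s hs)
    (ae_restrict_of_forall_mem measurableSet_Ioo fun s hs τ hτ =>
      hdrift τ hτ s hs ▸ hvtbdd τ hτ s hs) t ht
  rw [hIoo, hIoo, hconserved]
  exact setIntegral_congr_fun measurableSet_Ioo hinit

/-- Mass conservation (Corollary 3.2, point 3): if `v` is a bounded solution of
P((0,L),v0) with bounded time derivative and jointly measurable, and the map
`ξ ↦ K_h(ξ)·ξ` is odd, then `∫_0^L v(t,s) ds = ∫_0^L v0(s) ds` for every `t ∈ [0,T]`. -/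
theorem stmt_9
    (L : ℝ) (hL : 0 < L)
    (K : ℝ → ℝ) (hKnonneg : ∀ ξ, 0 ≤ K ξ) (BK : ℝ) (hKbdd : ∀ ξ, K ξ ≤ BK)
    (LK : NNReal) (hKlip : LipschitzWith LK K)
    (h : ℝ) (hh : 0 < h) (lam : ℝ) (hlam : 0 ≤ lam) (T : ℝ) (hT : 0 < T)
    (hodd : ∀ ξ : ℝ, K (-ξ / h) * (-ξ) = -(K (ξ / h) * ξ))
    (v0 : ℝ → ℝ) (hv0m : Measurable v0) (M0 : ℝ) (hv0b : ∀ s ∈ Ioo (0:ℝ) L, |v0 s| ≤ M0)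
    (v vt : ℝ → ℝ → ℝ)
    (hvmeas : ∀ t ∈ Icc (0:ℝ) T, Measurable (v t))
    (hvjoint : Measurable (Function.uncurry v))
    (M : ℝ) (hvbdd : ∀ t ∈ Icc (0:ℝ) T, ∀ s ∈ Ioo (0:ℝ) L, |v t s| ≤ M)
    (hinit : ∀ s ∈ Ioo (0:ℝ) L, v 0 s = v0 s)
    (hsol : ∀ t ∈ Icc (0:ℝ) T, ∀ s ∈ Ioo (0:ℝ) L,
      HasDerivWithinAt (fun τ => v τ s) (vt t s) (Icc 0 T) t)
    (hvt : ∀ t ∈ Icc (0:ℝ) T, ∀ s ∈ Ioo (0:ℝ) L,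
      vt t s = (∫ σ in (0:ℝ)..L, K ((v t σ - v t s) / h) * (v t σ - v t s))
        + lam * (v0 s - v t s))
    (B : ℝ) (hvtbdd : ∀ t ∈ Icc (0:ℝ) T, ∀ s ∈ Ioo (0:ℝ) L, |vt t s| ≤ B) :
    ∀ t ∈ Icc (0:ℝ) T, ∫ s in (0:ℝ)..L, v t s = ∫ s in (0:ℝ)..L, v0 s :=
  stmt_9_general L hL K LK hKlip h lam T hodd v0 v vt hvjoint M hvbdd hinit hsol hvt B hvtbdd
end

section
/- Exponential flattening when λ = 0 (Corollary 3.2, point 5): let λ = 0, let K be additionally continuously differentiable, let v be a bounded solution of problem P((0,L),v0) on [0,∞) with |v(t,s)| ≤ M for all (t,s), with v0 continuously differentiable, v and ∂_s v continuous, ∂_s v(·,s) differentiable in t, and ∂_t ∂_s v = ∂_s ∂_t v. Suppose c2 := L · inf{ K'_h(ξ)·ξ + K_h(ξ) : |ξ| ≤ 2M } > 0. Then for every t ≥ 0 and s ∈ (0,L), |∂_s v(t,s)| ≤ |v0'(s)| · e^{−c2 t}; in particular ∂_s v(t,·) converges uniformly to 0 as t → ∞. -/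
/-!
Differentiating the equation in `s` gives `∂ₜ∂ₛv = -∂ₛv · ∫₀ᴸ G(v(t,σ) - v(t,s)) dσ`, where
`G(ξ) = K'_h(ξ)ξ + K_h(ξ)` is the derivative of `ξ ↦ K_h(ξ)ξ`. Since `|v(t,σ) - v(t,s)| ≤ 2M`,
the integral is at least `c2`, so `t ↦ (∂ₛv)² e^{2 c2 t}` is antitone, which is the claimed decay.
-/

open MeasureTheory Set Filter

theorem HasDerivAt.comp_div_mul_self {K : ℝ → ℝ} {k h ξ : ℝ} (hK : HasDerivAt K k (ξ / h)) :
    HasDerivAt (fun ξ => K (ξ / h) * ξ) (k / h * ξ + K (ξ / h)) ξ := by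
  refine ((hK.comp ξ ((hasDerivAt_id' ξ).div_const h)).fun_mul (hasDerivAt_id' ξ)).congr_deriv ?_
  simp only [Function.comp_apply]
  ring

theorem sub_mem_Icc_of_abs_le {x y M : ℝ} (hx : |x| ≤ M) (hy : |y| ≤ M) :
    x - y ∈ Icc (-(2 * M)) (2 * M) := by
  rw [abs_le] at hx hy
  constructor <;> linarith

theorem intervalIntegrable_comp_of_mapsTo {g f : ℝ → ℝ} {a b : ℝ} {k : Set ℝ} (hab : a ≤ b)
    (hk : IsCompact k) (hg : Continuous g) (hf : Measurable f) (hfk : MapsTo f (Ioo a b) k) :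
    IntervalIntegrable (fun σ => g (f σ)) volume a b := by
  obtain ⟨C, hC⟩ := hk.exists_bound_of_continuousOn hg.continuousOn
  rw [intervalIntegrable_iff_integrableOn_Ioo_of_le hab]
  exact Measure.integrableOn_of_bounded (M := C) measure_Ioo_lt_top.ne
    (hg.measurable.comp hf).aestronglyMeasurable
    (ae_restrict_of_forall_mem measurableSet_Ioo fun σ hσ => hC _ (hfk hσ))

theorem mul_sInf_image_le_integral_comp {g f : ℝ → ℝ} {a b : ℝ} {k : Set ℝ} (hab : a ≤ b)
    (hk : IsCompact k) (hg : Continuous g) (hf : Measurable f) (hfk : MapsTo f (Ioo a b) k) :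
    (b - a) * sInf (g '' k) ≤ ∫ σ in a..b, g (f σ) := by
  have hbdd : BddBelow (g '' k) := (hk.image hg).bddBelow
  calc (b - a) * sInf (g '' k) = ∫ _ in a..b, sInf (g '' k) := by simp
    _ ≤ ∫ σ in a..b, g (f σ) :=
      intervalIntegral.integral_mono_on_of_le_Ioo hab intervalIntegrable_const
        (intervalIntegrable_comp_of_mapsTo hab hk hg hf hfk)
        fun σ hσ => csInf_le hbdd (mem_image_of_mem g (hfk hσ))

theorem hasDerivAt_integral_comp_sub_s10 {g g' u u' : ℝ → ℝ} {a b s M : ℝ}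
    (hg : ∀ ξ, HasDerivAt g (g' ξ) ξ) (hg' : Continuous g') (hu : Measurable u)
    (hbdd : ∀ σ ∈ Ioo a b, |u σ| ≤ M) (hu' : ∀ z ∈ Ioo a b, HasDerivAt u (u' z) z)
    (hu'cont : ContinuousAt u' s) (hs : s ∈ Ioo a b) :
    HasDerivAt (fun z => ∫ σ in a..b, g (u σ - u z))
      (-u' s * ∫ σ in a..b, g' (u σ - u s)) s := by
  have hab : a ≤ b := (hs.1.trans hs.2).le
  have hgc : Continuous g := continuous_iff_continuousAt.2 fun ξ => (hg ξ).continuousAt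
  have hdiff : ∀ σ ∈ Ioo a b, ∀ z ∈ Ioo a b, u σ - u z ∈ Icc (-(2 * M)) (2 * M) :=
    fun σ hσ z hz => sub_mem_Icc_of_abs_le (hbdd σ hσ) (hbdd z hz)
  obtain ⟨C, hC⟩ := isCompact_Icc.exists_bound_of_continuousOn hg'.continuousOn
    (s := Icc (-(2 * M)) (2 * M))
  set U := Ioo a b ∩ {z | |u' z| < |u' s| + 1}
  have hU : U ∈ nhds s := inter_mem (Ioo_mem_nhds hs.1 hs.2)
    (hu'cont.abs.eventually_lt_const (lt_add_one _))
  have hmem : ∀ᵐ σ, σ ∈ uIoc a b → σ ∈ Ioo a b := by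
    filter_upwards [compl_mem_ae_iff.2 (measure_singleton b)] with σ hσb hσ
    rw [uIoc_of_le hab] at hσ
    exact ⟨hσ.1, hσ.2.lt_of_ne hσb⟩
  have hderiv := intervalIntegral.hasDerivAt_integral_of_dominated_loc_of_deriv_le
    (F := fun z σ => g (u σ - u z)) (F' := fun z σ => -u' z * g' (u σ - u z))
    (bound := fun _ => (|u' s| + 1) * C) hU
    (Eventually.of_forall fun z => (hgc.measurable.comp (hu.sub_const _)).aestronglyMeasurable)
    (intervalIntegrable_comp_of_mapsTo hab isCompact_Icc hgc (hu.sub_const _)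
      fun σ hσ => hdiff σ hσ s hs)
    ((hg'.measurable.comp (hu.sub_const _)).const_mul _).aestronglyMeasurable ?_
    intervalIntegrable_const ?_
  · rw [← intervalIntegral.integral_const_mul]
    exact hderiv.2
  · filter_upwards [hmem] with σ hσ hσI z hz
    rw [Real.norm_eq_abs, abs_mul, abs_neg]
    exact mul_le_mul hz.2.le (hC _ (hdiff σ (hσ hσI) z hz.1)) (abs_nonneg _)
      (by positivity)
  · filter_upwards [hmem] with σ hσ hσI z hz
    refine ((hg _).comp z ((hu' z hz.1).const_sub (u σ))).congr_deriv ?_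
    ring

theorem abs_le_mul_exp_of_mul_deriv_le {f f' : ℝ → ℝ} {c : ℝ}
    (hf : ∀ t ∈ Ici (0 : ℝ), HasDerivWithinAt f (f' t) (Ici 0) t)
    (hdecay : ∀ t, 0 < t → f t * f' t ≤ -c * f t ^ 2) {t : ℝ} (ht : 0 ≤ t) :
    |f t| ≤ |f 0| * Real.exp (-c * t) := by
  set φ : ℝ → ℝ := fun τ => f τ ^ 2 * Real.exp (2 * c * τ)
  have hφ : ∀ τ ∈ Ici (0 : ℝ), HasDerivWithinAt φ
      (2 * (f τ * f' τ + c * f τ ^ 2) * Real.exp (2 * c * τ)) (Ici 0) τ := by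
    intro τ hτ
    refine (((hf τ hτ).fun_pow 2).fun_mul
      (((hasDerivAt_id' τ).const_mul (2 * c)).exp).hasDerivWithinAt).congr_deriv ?_
    ring
  have hanti : AntitoneOn φ (Ici 0) := by
    refine antitoneOn_of_hasDerivWithinAt_nonpos (convex_Ici 0)
      (fun τ hτ => (hφ τ hτ).continuousWithinAt)
      (fun τ hτ => (hφ τ (interior_subset hτ)).mono interior_subset) fun τ hτ => ?_
    rw [interior_Ici] at hτ
    nlinarith [hdecay τ hτ, Real.exp_pos (2 * c * τ)]
  have hsq : (f t * Real.exp (c * t)) ^ 2 ≤ f 0 ^ 2 := by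
    have := hanti self_mem_Ici ht ht
    simp only [φ, mul_zero, Real.exp_zero, mul_one] at this
    rwa [mul_pow, ← Real.exp_nat_mul, Nat.cast_ofNat, ← mul_assoc]
  rw [sq_le_sq, abs_mul, abs_of_pos (Real.exp_pos _), ← le_div_iff₀ (Real.exp_pos _)] at hsq
  rwa [neg_mul, Real.exp_neg, ← div_eq_mul_inv]

theorem tendstoUniformlyOn_zero_of_abs_le_mul_exp {F : ℝ → ℝ → ℝ} {S : Set ℝ} {c C : ℝ}
    (hc : 0 < c) (hF : ∀ t, 0 ≤ t → ∀ s ∈ S, |F t s| ≤ C * Real.exp (-c * t)) :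
    TendstoUniformlyOn F 0 atTop S := by
  have hlim : Tendsto (fun t => C * Real.exp (-c * t)) atTop (nhds 0) := by
    simpa using ((Real.tendsto_exp_atBot.comp
      (tendsto_id.const_mul_atTop_of_neg (neg_lt_zero.2 hc))).const_mul C)
  refine SeminormedAddGroup.tendstoUniformlyOn_zero.2 fun ε hε => ?_
  filter_upwards [hlim.eventually_lt_const hε, eventually_ge_atTop 0] with t hlt ht s hs
  exact (hF t ht s hs).trans_lt hlt

theorem stmt_10_general
    (L : ℝ)
    (K K' : ℝ → ℝ)
    (hKderiv : ∀ ξ, HasDerivAt K (K' ξ) ξ) (hK'cont : Continuous K')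
    (h : ℝ)
    (v0 v0' : ℝ → ℝ) (hv0deriv : ∀ s, HasDerivAt v0 (v0' s) s) (hv0'cont : Continuous v0')
    (v vs vt vts : ℝ → ℝ → ℝ)
    (hvmeas : ∀ t, 0 ≤ t → Measurable (v t))
    (M : ℝ) (hvbdd : ∀ t, 0 ≤ t → ∀ s ∈ Ioo (0:ℝ) L, |v t s| ≤ M)
    (hinit : ∀ s ∈ Ioo (0:ℝ) L, v 0 s = v0 s)
    -- v solves the equation with λ = 0
    (hvt : ∀ t, 0 ≤ t → ∀ s ∈ Ioo (0:ℝ) L,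
      vt t s = ∫ σ in (0:ℝ)..L, K ((v t σ - v t s) / h) * (v t σ - v t s))
    -- ∂_s v = vs, with v and ∂_s v continuous
    (hvs : ∀ t, 0 ≤ t → ∀ s ∈ Ioo (0:ℝ) L, HasDerivAt (fun z => v t z) (vs t s) s)
    (hvscont : ContinuousOn (fun p : ℝ × ℝ => vs p.1 p.2) (Ici 0 ×ˢ Ioo 0 L))
    -- commuting mixed partials: ∂_t ∂_s v = vts = ∂_s ∂_t v
    (hmix1 : ∀ t, 0 ≤ t → ∀ s ∈ Ioo (0:ℝ) L,
      HasDerivWithinAt (fun τ => vs τ s) (vts t s) (Ici 0) t)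
    (hmix2 : ∀ t, 0 ≤ t → ∀ s ∈ Ioo (0:ℝ) L,
      HasDerivAt (fun z => vt t z) (vts t s) s)
    (c2 : ℝ)
    (hc2def : c2 = L * sInf ((fun ξ => K' (ξ / h) / h * ξ + K (ξ / h)) ''
      Icc (-(2 * M)) (2 * M)))
    (hc2pos : 0 < c2) :
    (∀ t, 0 ≤ t → ∀ s ∈ Ioo (0:ℝ) L, |vs t s| ≤ |v0' s| * Real.exp (-c2 * t)) ∧
    TendstoUniformlyOn (fun t s => vs t s) 0 atTop (Ioo 0 L) := by
  set G : ℝ → ℝ := fun ξ => K' (ξ / h) / h * ξ + K (ξ / h)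
  have hKc : Continuous K := continuous_iff_continuousAt.2 fun ξ => (hKderiv ξ).continuousAt
  have hGc : Continuous G := by fun_prop
  have hvs_cont : ∀ t, 0 ≤ t → ∀ s ∈ Ioo (0:ℝ) L, ContinuousAt (vs t) s := fun t ht s hs =>
    (hvscont.comp (Continuous.prodMk_right t).continuousOn fun z hz => ⟨ht, hz⟩).continuousAt
      (Ioo_mem_nhds hs.1 hs.2)
  have hvts : ∀ t, 0 ≤ t → ∀ s ∈ Ioo (0:ℝ) L,
      vts t s = -vs t s * ∫ σ in (0:ℝ)..L, G (v t σ - v t s) := fun t ht s hs =>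
    (hmix2 t ht s hs).unique <| (hasDerivAt_integral_comp_sub_s10
      (fun ξ => (hKderiv (ξ / h)).comp_div_mul_self) hGc (hvmeas t ht) (hvbdd t ht) (hvs t ht)
      (hvs_cont t ht s hs) hs).congr_of_eventuallyEq
        (eventually_of_mem (Ioo_mem_nhds hs.1 hs.2) (hvt t ht))
  have hc2_le : ∀ t, 0 ≤ t → ∀ s ∈ Ioo (0:ℝ) L, c2 ≤ ∫ σ in (0:ℝ)..L, G (v t σ - v t s) :=
    fun t ht s hs => by
      simpa [hc2def] using mul_sInf_image_le_integral_comp (hs.1.trans hs.2).le isCompact_Icc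
        hGc ((hvmeas t ht).sub_const _)
        fun σ hσ => sub_mem_Icc_of_abs_le (hvbdd t ht σ hσ) (hvbdd t ht s hs)
  have hdecay : ∀ t, 0 ≤ t → ∀ s ∈ Ioo (0:ℝ) L, |vs t s| ≤ |v0' s| * Real.exp (-c2 * t) := by
    intro t ht s hs
    have hvs0 : vs 0 s = v0' s := ((hvs 0 le_rfl s hs).congr_of_eventuallyEq
      (eventually_of_mem (Ioo_mem_nhds hs.1 hs.2) fun z hz => (hinit z hz).symm)).unique
        (hv0deriv s)
    rw [← hvs0]
    refine abs_le_mul_exp_of_mul_deriv_le (fun τ hτ => hmix1 τ hτ s hs) (fun τ hτ => ?_) ht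
    rw [hvts τ hτ.le s hs]
    nlinarith [mul_nonneg (sq_nonneg (vs τ s)) (sub_nonneg.2 (hc2_le τ hτ.le s hs))]
  obtain ⟨C, hC⟩ := isCompact_Icc.exists_bound_of_continuousOn hv0'cont.continuousOn
    (s := Icc 0 L)
  exact ⟨hdecay, tendstoUniformlyOn_zero_of_abs_le_mul_exp hc2pos fun t ht s hs =>
    (hdecay t ht s hs).trans (mul_le_mul_of_nonneg_right (hC s (Ioo_subset_Icc_self hs))
      (Real.exp_pos _).le)⟩

/-- Exponential flattening when λ = 0 (Corollary 3.2, point 5): if `v` is a bounded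
solution of P((0,L),v0) with λ = 0, `K ∈ C¹`, commuting mixed partials, and
`c2 := L · inf{ K'_h(ξ)ξ + K_h(ξ) : |ξ| ≤ 2M } > 0`, then
`|∂_s v(t,s)| ≤ |v0'(s)| e^{−c2 t}`; in particular `∂_s v(t,·) → 0` uniformly. -/
theorem stmt_10
    (L : ℝ) (hL : 0 < L)
    (K K' : ℝ → ℝ) (hKnonneg : ∀ ξ, 0 ≤ K ξ) (BK : ℝ) (hKbdd : ∀ ξ, K ξ ≤ BK)
    (LK : NNReal) (hKlip : LipschitzWith LK K)
    (hKderiv : ∀ ξ, HasDerivAt K (K' ξ) ξ) (hK'cont : Continuous K')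
    (BK' : ℝ) (hK'bdd : ∀ ξ, |K' ξ| ≤ BK')
    (h : ℝ) (hh : 0 < h)
    (v0 v0' : ℝ → ℝ) (hv0deriv : ∀ s, HasDerivAt v0 (v0' s) s) (hv0'cont : Continuous v0')
    (v vs vt vts : ℝ → ℝ → ℝ)
    (hvmeas : ∀ t, 0 ≤ t → Measurable (v t))
    (M : ℝ) (hvbdd : ∀ t, 0 ≤ t → ∀ s ∈ Ioo (0:ℝ) L, |v t s| ≤ M)
    (hinit : ∀ s ∈ Ioo (0:ℝ) L, v 0 s = v0 s)
    -- v solves the equation with λ = 0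
    (hsol : ∀ t, 0 ≤ t → ∀ s ∈ Ioo (0:ℝ) L,
      HasDerivWithinAt (fun τ => v τ s) (vt t s) (Ici 0) t)
    (hvt : ∀ t, 0 ≤ t → ∀ s ∈ Ioo (0:ℝ) L,
      vt t s = ∫ σ in (0:ℝ)..L, K ((v t σ - v t s) / h) * (v t σ - v t s))
    -- ∂_s v = vs, with v and ∂_s v continuous
    (hvs : ∀ t, 0 ≤ t → ∀ s ∈ Ioo (0:ℝ) L, HasDerivAt (fun z => v t z) (vs t s) s)
    (hvcont : ContinuousOn (fun p : ℝ × ℝ => v p.1 p.2) (Ici 0 ×ˢ Ioo 0 L))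
    (hvscont : ContinuousOn (fun p : ℝ × ℝ => vs p.1 p.2) (Ici 0 ×ˢ Ioo 0 L))
    -- commuting mixed partials: ∂_t ∂_s v = vts = ∂_s ∂_t v
    (hmix1 : ∀ t, 0 ≤ t → ∀ s ∈ Ioo (0:ℝ) L,
      HasDerivWithinAt (fun τ => vs τ s) (vts t s) (Ici 0) t)
    (hmix2 : ∀ t, 0 ≤ t → ∀ s ∈ Ioo (0:ℝ) L,
      HasDerivAt (fun z => vt t z) (vts t s) s)
    (c2 : ℝ)
    (hc2def : c2 = L * sInf ((fun ξ => K' (ξ / h) / h * ξ + K (ξ / h)) ''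
      Icc (-(2 * M)) (2 * M)))
    (hc2pos : 0 < c2) :
    (∀ t, 0 ≤ t → ∀ s ∈ Ioo (0:ℝ) L, |vs t s| ≤ |v0' s| * Real.exp (-c2 * t)) ∧
    TendstoUniformlyOn (fun t s => vs t s) 0 atTop (Ioo 0 L) :=
  stmt_10_general L K K' hKderiv hK'cont h v0 v0' hv0deriv hv0'cont v vs vt vts hvmeas M hvbdd hinit
    hvt hvs hvscont hmix1 hmix2 c2 hc2def hc2pos
end

section
/- Rearranged double-integral identity (equation (cor.4)): let w : Ω → ℝ be bounded measurable with no flat regions, and let w_* be its decreasing rearrangement. Then for every s ∈ (0,|Ω|), ∫_{{x ∈ Ω : w(x) > w_*(s)}} ∫_Ω K_h(w(y) − w(x))·(w(y) − w(x)) dy dx = ∫_0^s ∫_0^{|Ω|} K_h(w_*(σ) − w_*(τ))·(w_*(σ) − w_*(τ)) dσ dτ. -/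
open MeasureTheory Set

/-- The distribution function `m_w(q) = |{x ∈ Ω : w(x) > q}|`. -/
noncomputable def distFun {d : ℕ} (Ω : Set (Fin d → ℝ)) (w : (Fin d → ℝ) → ℝ)
    (q : ℝ) : ℝ :=
  (volume {x ∈ Ω | q < w x}).toReal

/-- The decreasing rearrangement `w_*(s) = inf{q ∈ ℝ : m_w(q) ≤ s}`. -/
noncomputable def decRearr {d : ℕ} (Ω : Set (Fin d → ℝ)) (w : (Fin d → ℝ) → ℝ)
    (s : ℝ) : ℝ :=
  sInf {q : ℝ | distFun Ω w q ≤ s}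

private lemma distFun_ne_top {d : ℕ} {Ω : Set (Fin d → ℝ)} (hvol : volume Ω ≠ ⊤)
    (w : (Fin d → ℝ) → ℝ) (q : ℝ) : volume {x ∈ Ω | q < w x} ≠ ⊤ :=
  (lt_of_le_of_lt (measure_mono (sep_subset _ _)) hvol.lt_top).ne

/-- Right continuity of the distribution function (in inequality form). -/
private lemma distFun_right_cont {d : ℕ} {Ω : Set (Fin d → ℝ)} {w : (Fin d → ℝ) → ℝ}
    (hvol : volume Ω ≠ ⊤) {c r : ℝ} (hr : 0 ≤ r)
    (hq : ∀ q, c < q → distFun Ω w q ≤ r) : distFun Ω w c ≤ r := by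
  have hne := distFun_ne_top hvol w
  have hUnion : {x ∈ Ω | c < w x} = ⋃ n : ℕ, {x ∈ Ω | c + 1/(n+1) < w x} := by
    ext x
    simp only [mem_iUnion, mem_sep_iff]
    constructor
    · rintro ⟨hx, hlt⟩
      obtain ⟨n, hn⟩ := exists_nat_one_div_lt (sub_pos.2 hlt)
      exact ⟨n, hx, by push_cast at hn ⊢; linarith⟩
    · rintro ⟨n, hx, hlt⟩
      have hpos : (0:ℝ) < 1/((n:ℝ)+1) := by positivity
      exact ⟨hx, by linarith⟩
  have hmono : Monotone (fun n : ℕ => {x ∈ Ω | c + 1/((n:ℝ)+1) < w x}) := by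
    intro a b hab x hx
    refine ⟨hx.1, lt_of_le_of_lt ?_ hx.2⟩
    have hab' : ((a:ℝ)+1) ≤ ((b:ℝ)+1) := by exact_mod_cast Nat.succ_le_succ hab
    have := one_div_le_one_div_of_le (by positivity : (0:ℝ) < (a:ℝ)+1) hab'
    linarith
  have hle : volume {x ∈ Ω | c < w x} ≤ ENNReal.ofReal r := by
    rw [hUnion, hmono.measure_iUnion]
    exact iSup_le fun n =>
      (ENNReal.le_ofReal_iff_toReal_le (hne _) hr).mpr
        (hq _ (lt_add_of_pos_right c (by positivity)))
  exact (ENNReal.le_ofReal_iff_toReal_le (hne _) hr).mp hle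

/-- Left continuity of the distribution function, using the no-flat-regions hypothesis. -/
private lemma distFun_left_cont {d : ℕ} {Ω : Set (Fin d → ℝ)} (hΩm : MeasurableSet Ω)
    {w : (Fin d → ℝ) → ℝ} (hwm : Measurable w) (hvol : volume Ω ≠ ⊤)
    (hflat : ∀ q : ℝ, volume {x ∈ Ω | w x = q} = 0) {c r : ℝ}
    (hq : ∀ q, q < c → r ≤ distFun Ω w q) : r ≤ distFun Ω w c := by
  rcases le_or_gt r 0 with h0 | h0
  · exact h0.trans ENNReal.toReal_nonneg
  have hne := distFun_ne_top hvol w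
  have hInter : {x ∈ Ω | c ≤ w x} = ⋂ n : ℕ, {x ∈ Ω | c - 1/((n:ℝ)+1) < w x} := by
    ext x
    simp only [mem_iInter, mem_sep_iff]
    constructor
    · rintro ⟨hx, hle⟩ n
      have hpos : (0:ℝ) < 1/((n:ℝ)+1) := by positivity
      exact ⟨hx, by linarith⟩
    · intro hx
      refine ⟨(hx 0).1, ?_⟩
      by_contra hlt
      push_neg at hlt
      obtain ⟨n, hn⟩ := exists_nat_one_div_lt (sub_pos.2 hlt)
      have := (hx n).2
      push_cast at hn this ⊢
      linarith
  have hanti : Antitone (fun n : ℕ => {x ∈ Ω | c - 1/((n:ℝ)+1) < w x}) := by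
    intro a b hab x hx
    refine ⟨hx.1, lt_of_le_of_lt ?_ hx.2⟩
    have hab' : ((a:ℝ)+1) ≤ ((b:ℝ)+1) := by exact_mod_cast Nat.succ_le_succ hab
    have := one_div_le_one_div_of_le (by positivity : (0:ℝ) < (a:ℝ)+1) hab'
    linarith
  have hms : ∀ n : ℕ, MeasurableSet {x ∈ Ω | c - 1/((n:ℝ)+1) < w x} := by
    intro n
    exact hΩm.inter (hwm measurableSet_Ioi)
  have hinf : volume {x ∈ Ω | c ≤ w x} = ⨅ n : ℕ, volume {x ∈ Ω | c - 1/((n:ℝ)+1) < w x} := by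
    rw [hInter]
    exact Directed.measure_iInter (fun n => (hms n).nullMeasurableSet) hanti.directed_ge
      ⟨0, hne _⟩
  have hsplit : volume {x ∈ Ω | c ≤ w x} = volume {x ∈ Ω | c < w x} := by
    have hU : {x ∈ Ω | c ≤ w x} = {x ∈ Ω | c < w x} ∪ {x ∈ Ω | w x = c} := by
      ext x
      simp only [mem_union, mem_sep_iff]
      constructor
      · rintro ⟨hx, hle⟩
        rcases lt_or_eq_of_le hle with hlt | heq
        exacts [Or.inl ⟨hx, hlt⟩, Or.inr ⟨hx, heq.symm⟩]
      · rintro (⟨hx, hlt⟩ | ⟨hx, heq⟩)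
        exacts [⟨hx, hlt.le⟩, ⟨hx, heq.ge⟩]
    apply le_antisymm
    · calc volume {x ∈ Ω | c ≤ w x} ≤ volume {x ∈ Ω | c < w x} + volume {x ∈ Ω | w x = c} := by
            rw [hU]; exact measure_union_le _ _
        _ = volume {x ∈ Ω | c < w x} := by rw [hflat c, add_zero]
    · apply measure_mono
      rintro x ⟨hx, hlt⟩
      exact ⟨hx, hlt.le⟩
  have hge : ENNReal.ofReal r ≤ volume {x ∈ Ω | c < w x} := by
    rw [← hsplit, hinf]
    refine le_iInf fun n => ?_
    have hlt : c - 1/((n:ℝ)+1) < c := by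
      have : (0:ℝ) < 1/((n:ℝ)+1) := by positivity
      linarith
    exact ENNReal.ofReal_le_of_le_toReal (hq _ hlt)
  calc r = (ENNReal.ofReal r).toReal := (ENNReal.toReal_ofReal h0.le).symm
    _ ≤ (volume {x ∈ Ω | c < w x}).toReal := ENNReal.toReal_mono (hne _) hge

/-- Rearranged double-integral identity (equation (cor.4)): for a bounded measurable
`w` with no flat regions and every `s ∈ (0,|Ω|)`,
`∫_{{w > w_*(s)}} ∫_Ω K_h(w(y)−w(x))(w(y)−w(x)) dy dx
 = ∫_0^s ∫_0^{|Ω|} K_h(w_*(σ)−w_*(τ))(w_*(σ)−w_*(τ)) dσ dτ`. -/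
theorem stmt_11
    (d : ℕ) (hd : 1 ≤ d)
    (Ω : Set (Fin d → ℝ)) (hΩopen : IsOpen Ω) (hΩbdd : Bornology.IsBounded Ω)
    (K : ℝ → ℝ) (hKnonneg : ∀ ξ, 0 ≤ K ξ) (BK : ℝ) (hKbdd : ∀ ξ, K ξ ≤ BK)
    (LK : NNReal) (hKlip : LipschitzWith LK K)
    (h : ℝ) (hh : 0 < h)
    (w : (Fin d → ℝ) → ℝ) (hwm : Measurable w) (M : ℝ) (hwb : ∀ x ∈ Ω, |w x| ≤ M)
    (hflat : ∀ q : ℝ, volume {x ∈ Ω | w x = q} = 0) :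
    ∀ s ∈ Ioo (0:ℝ) (volume Ω).toReal,
      (∫ x in {x ∈ Ω | decRearr Ω w s < w x},
        (∫ y in Ω, K ((w y - w x) / h) * (w y - w x)))
      = ∫ τ in (0:ℝ)..s, ∫ σ in (0:ℝ)..(volume Ω).toReal,
          K ((decRearr Ω w σ - decRearr Ω w τ) / h) * (decRearr Ω w σ - decRearr Ω w τ) := by
  intro s hs
  obtain ⟨hs0, hsL⟩ := hs
  set L : ℝ := (volume Ω).toReal with hLdef
  have hΩm : MeasurableSet Ω := hΩopen.measurableSet
  have hvolfin : volume Ω < ⊤ := hΩbdd.measure_lt_top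
  have hvolne : volume Ω ≠ ⊤ := hvolfin.ne
  have hne := distFun_ne_top hvolne w
  have hL0 : 0 < L := lt_trans hs0 hsL
  set m : ℝ → ℝ := distFun Ω w with hmdef
  -- basic facts about m
  have hm_anti : ∀ {q q' : ℝ}, q ≤ q' → m q' ≤ m q := by
    intro q q' hqq
    apply ENNReal.toReal_mono (hne q)
    apply measure_mono
    rintro x ⟨hx, hlt⟩
    exact ⟨hx, lt_of_le_of_lt hqq hlt⟩
  have hm_le_L : ∀ q, m q ≤ L :=
    fun q => ENNReal.toReal_mono hvolne (measure_mono (sep_subset _ _))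
  have hΩne : Ω.Nonempty := by
    rcases eq_empty_or_nonempty Ω with hE | hne'
    · exfalso
      rw [hLdef, hE] at hL0
      simp at hL0
    · exact hne'
  have hM0 : 0 ≤ M := by
    obtain ⟨x, hx⟩ := hΩne
    exact (abs_nonneg _).trans (hwb x hx)
  have hm_M : ∀ q, M ≤ q → m q = 0 := by
    intro q hq
    have hE : {x ∈ Ω | q < w x} = ∅ := by
      ext x
      simp only [mem_sep_iff, mem_empty_iff_false, iff_false, not_and, not_lt]
      intro hx
      exact le_trans (le_trans (le_abs_self _) (hwb x hx)) hq
    rw [hmdef]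
    unfold distFun
    rw [hE]
    simp
  have hm_neg : ∀ q, q < -M → m q = L := by
    intro q hq
    have hE : {x ∈ Ω | q < w x} = Ω := by
      ext x
      simp only [mem_sep_iff, and_iff_left_iff_imp]
      intro hx
      exact lt_of_lt_of_le hq (neg_le_of_abs_le (hwb x hx))
    rw [hmdef]
    unfold distFun
    rw [hE]
  -- facts about the sets S r = {q | m q ≤ r}
  have hSne : ∀ r : ℝ, 0 ≤ r → M ∈ {q : ℝ | m q ≤ r} := by
    intro r hr
    simp only [mem_setOf_eq, hm_M M le_rfl]
    exact hr
  have hSbd : ∀ r : ℝ, r < L → ∀ q ∈ {q : ℝ | m q ≤ r}, -M ≤ q := by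
    intro r hr q hq
    by_contra hlt
    push_neg at hlt
    rw [mem_setOf_eq, hm_neg q hlt] at hq
    exact absurd hq (not_le.2 hr)
  have hSbdd : ∀ r : ℝ, r < L → BddBelow {q : ℝ | m q ≤ r} :=
    fun r hr => ⟨-M, fun q hq => hSbd r hr q hq⟩
  -- the key equivalence
  have hIff : ∀ σ ∈ Ioo (0:ℝ) L, ∀ q : ℝ, q < decRearr Ω w σ ↔ σ < m q := by
    intro σ hσ q
    constructor
    · intro hlt
      by_contra hc
      push_neg at hc
      have hmem : q ∈ {q : ℝ | m q ≤ σ} := hc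
      exact absurd hlt (not_lt.2 (csInf_le (hSbdd σ hσ.2) hmem))
    · intro hlt
      by_contra hc
      push_neg at hc
      -- decRearr Ω w σ ≤ q; show ∀ q' > q, m q' ≤ σ, then right continuity
      have hall : ∀ q', q < q' → m q' ≤ σ := by
        intro q' hq'
        have hlt2 : sInf {q : ℝ | m q ≤ σ} < q' := lt_of_le_of_lt hc hq'
        obtain ⟨b, hbS, hbq⟩ := exists_lt_of_csInf_lt ⟨M, hSne σ hσ.1.le⟩ hlt2
        exact le_trans (hm_anti hbq.le) hbS
      have := distFun_right_cont hvolne hσ.1.le hall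
      rw [← hmdef] at this
      exact absurd hlt (not_lt.2 this)
  -- m (decRearr Ω w s) = s
  set c : ℝ := decRearr Ω w s with hcdef
  have hmc : m c = s := by
    apply le_antisymm
    · apply distFun_right_cont hvolne hs0.le
      intro q hq
      obtain ⟨b, hbS, hbq⟩ := exists_lt_of_csInf_lt ⟨M, hSne s hs0.le⟩ hq
      exact le_trans (hm_anti hbq.le) hbS
    · apply distFun_left_cont hΩm hwm hvolne hflat
      intro q hq
      by_contra hc2
      push_neg at hc2
      have hmem : q ∈ {q : ℝ | m q ≤ s} := hc2.le
      exact absurd hq (not_lt.2 (csInf_le (hSbdd s hsL) hmem))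
  -- the globally antitone modification g of decRearr
  set g : ℝ → ℝ := fun σ => sInf ({q : ℝ | m q ≤ max σ 0} ∩ Ici (-M)) with hgdef
  have hg_eq : ∀ σ ∈ Ico (0:ℝ) L, g σ = decRearr Ω w σ := by
    intro σ hσ
    have hmax : max σ 0 = σ := max_eq_left hσ.1
    have hsub : {q : ℝ | m q ≤ σ} ⊆ Ici (-M) := fun q hq => hSbd σ hσ.2 q hq
    rw [hgdef]
    simp only [hmax]
    rw [inter_eq_self_of_subset_left hsub]
    rfl
  have hganti : Antitone g := by
    intro σ σ' hle
    apply csInf_le_csInf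
    · exact ⟨-M, fun q hq => hq.2⟩
    · exact ⟨M, hSne (max σ 0) (le_max_right _ _), neg_le_self hM0⟩
    · intro q hq
      exact ⟨le_trans hq.1 (max_le_max hle le_rfl), hq.2⟩
  have hgm : Measurable g := hganti.measurable
  -- measures
  set μ : Measure (Fin d → ℝ) := volume.restrict Ω with hμdef
  set ν : Measure ℝ := volume.restrict (Ioo 0 L) with hνdef
  haveI : IsFiniteMeasure μ := by
    constructor
    rw [hμdef, Measure.restrict_apply_univ]
    exact hvolfin
  have hsetm : ∀ q : ℝ, w ⁻¹' (Ioi q) ∩ Ω = {x ∈ Ω | q < w x} := by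
    intro q
    ext x
    simp only [mem_inter_iff, mem_preimage, mem_Ioi, mem_sep_iff]
    exact and_comm
  have hPQ : Measure.map w μ = Measure.map g ν := by
    haveI : IsFiniteMeasure (Measure.map w μ) := by
      constructor
      rw [Measure.map_apply hwm MeasurableSet.univ]
      exact (measure_mono (subset_univ _)).trans_lt (by rw [hμdef, Measure.restrict_apply_univ]; exact hvolfin)
    apply ext_of_generate_finite (range Ioi)
      ((BorelSpace.measurable_eq (α := ℝ)).trans (borel_eq_generateFrom_Ioi ℝ)) isPiSystem_Ioi
    · rintro t ⟨q, rfl⟩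
      have hP : Measure.map w μ (Ioi q) = volume {x ∈ Ω | q < w x} := by
        rw [Measure.map_apply hwm measurableSet_Ioi, hμdef,
          Measure.restrict_apply (hwm measurableSet_Ioi), hsetm q]
      have hQ : Measure.map g ν (Ioi q) = ENNReal.ofReal (m q) := by
        rw [Measure.map_apply hgm measurableSet_Ioi, hνdef,
          Measure.restrict_apply (hgm measurableSet_Ioi)]
        have hset : g ⁻¹' (Ioi q) ∩ Ioo 0 L = Ioo 0 (min (m q) L) := by
          ext σ
          simp only [mem_inter_iff, mem_preimage, mem_Ioi, mem_Ioo, lt_min_iff]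
          constructor
          · rintro ⟨hgσ, h0σ, hσL⟩
            rw [hg_eq σ ⟨h0σ.le, hσL⟩] at hgσ
            exact ⟨h0σ, (hIff σ ⟨h0σ, hσL⟩ q).mp hgσ, hσL⟩
          · rintro ⟨h0σ, hσm, hσL⟩
            refine ⟨?_, h0σ, hσL⟩
            rw [hg_eq σ ⟨h0σ.le, hσL⟩]
            exact (hIff σ ⟨h0σ, hσL⟩ q).mpr hσm
        rw [hset, Real.volume_Ioo, sub_zero, min_eq_left (hm_le_L q)]
      rw [hP, hQ, ← ENNReal.ofReal_toReal (hne q)]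
      rfl
    · rw [Measure.map_apply hwm MeasurableSet.univ, Measure.map_apply hgm MeasurableSet.univ,
        preimage_univ, preimage_univ, hμdef, hνdef, Measure.restrict_apply_univ,
        Measure.restrict_apply_univ, Real.volume_Ioo, sub_zero, ENNReal.ofReal_toReal hvolne]
  -- continuity of the integrand
  have hKc : Continuous K := hKlip.continuous
  have hF2 : Continuous (fun p : ℝ × ℝ => K ((p.1 - p.2) / h) * (p.1 - p.2)) :=
    (hKc.comp ((continuous_fst.sub continuous_snd).div_const h)).mul
      (continuous_fst.sub continuous_snd)
  -- Step A : inner integral identity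
  have stepA : ∀ b : ℝ,
      (∫ y in Ω, K ((w y - b) / h) * (w y - b))
        = ∫ σ in Ioo (0:ℝ) L, K ((g σ - b) / h) * (g σ - b) := by
    intro b
    have hcont : Continuous (fun a : ℝ => K ((a - b) / h) * (a - b)) :=
      hF2.comp (continuous_id.prodMk continuous_const)
    have h1 : (∫ a, K ((a - b) / h) * (a - b) ∂(Measure.map w μ))
        = ∫ y in Ω, K ((w y - b) / h) * (w y - b) :=
      integral_map hwm.aemeasurable hcont.aestronglyMeasurable
    have h2 : (∫ a, K ((a - b) / h) * (a - b) ∂(Measure.map g ν))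
        = ∫ σ in Ioo (0:ℝ) L, K ((g σ - b) / h) * (g σ - b) :=
      integral_map hgm.aemeasurable hcont.aestronglyMeasurable
    rw [← h1, hPQ, h2]
  -- the function G
  set G : ℝ → ℝ := fun b => ∫ σ in Ioo (0:ℝ) L, K ((g σ - b) / h) * (g σ - b) with hGdef
  have hGsm : StronglyMeasurable G := by
    have hmeas : StronglyMeasurable
        (fun p : ℝ × ℝ => K ((g p.2 - p.1) / h) * (g p.2 - p.1)) := by
      apply Measurable.stronglyMeasurable
      exact hF2.measurable.comp ((hgm.comp measurable_snd).prodMk measurable_fst)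
    exact hmeas.integral_prod_right'
  have hGind : StronglyMeasurable ((Ioi c).indicator G) :=
    hGsm.indicator measurableSet_Ioi
  -- Step B : LHS equals ∫_{Ioo 0 s} G (g σ)
  have stepB : (∫ x in {x ∈ Ω | c < w x}, (∫ y in Ω, K ((w y - w x) / h) * (w y - w x)))
      = ∫ σ in Ioo (0:ℝ) s, G (g σ) := by
    have hmsA : MeasurableSet {x ∈ Ω | c < w x} := by
      rw [← hsetm c]
      exact (hwm measurableSet_Ioi).inter hΩm
    calc (∫ x in {x ∈ Ω | c < w x}, (∫ y in Ω, K ((w y - w x) / h) * (w y - w x)))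
        = ∫ x in {x ∈ Ω | c < w x}, G (w x) :=
          setIntegral_congr_fun hmsA (fun x _ => stepA (w x))
      _ = ∫ x in w ⁻¹' (Ioi c), G (w x) ∂μ := by
          rw [hμdef, Measure.restrict_restrict (hwm measurableSet_Ioi), hsetm c]
      _ = ∫ x, (Ioi c).indicator G (w x) ∂μ := by
          rw [← integral_indicator (hwm measurableSet_Ioi)]
          apply integral_congr_ae
          filter_upwards with x
          by_cases hx : w x ∈ Ioi c
          · rw [indicator_of_mem hx G, indicator_of_mem (show x ∈ w ⁻¹' Ioi c from hx)]
          · rw [indicator_of_notMem hx G, indicator_of_notMem (show x ∉ w ⁻¹' Ioi c from hx)]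
      _ = ∫ a, (Ioi c).indicator G a ∂(Measure.map w μ) :=
          (integral_map hwm.aemeasurable hGind.aestronglyMeasurable).symm
      _ = ∫ a, (Ioi c).indicator G a ∂(Measure.map g ν) := by rw [hPQ]
      _ = ∫ σ, (Ioi c).indicator G (g σ) ∂ν :=
          integral_map hgm.aemeasurable hGind.aestronglyMeasurable
      _ = ∫ σ, (Ioo (0:ℝ) L).indicator (fun σ => (Ioi c).indicator G (g σ)) σ := by
          rw [integral_indicator measurableSet_Ioo]
      _ = ∫ σ, (Ioo (0:ℝ) s).indicator (fun σ => G (g σ)) σ := by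
          congr 1
          ext σ
          by_cases hσL : σ ∈ Ioo (0:ℝ) L
          · rw [indicator_of_mem hσL]
            by_cases hσs : σ < s
            · have hmem : σ ∈ Ioo (0:ℝ) s := ⟨hσL.1, hσs⟩
              rw [indicator_of_mem hmem]
              apply indicator_of_mem
              show c < g σ
              rw [hg_eq σ ⟨hσL.1.le, hσL.2⟩]
              exact (hIff σ hσL c).mpr (by rw [hmc]; exact hσs)
            · rw [indicator_of_notMem
                (show σ ∉ Ioo (0:ℝ) s from fun hmem => hσs hmem.2)]
              apply indicator_of_notMem
              show ¬ c < g σ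
              rw [hg_eq σ ⟨hσL.1.le, hσL.2⟩]
              intro hcon
              exact hσs (by rw [← hmc]; exact (hIff σ hσL c).mp hcon)
          · rw [indicator_of_notMem hσL, indicator_of_notMem
              (show σ ∉ Ioo (0:ℝ) s from fun hmem => hσL ⟨hmem.1, lt_trans hmem.2 hsL⟩)]
      _ = ∫ σ in Ioo (0:ℝ) s, G (g σ) := integral_indicator measurableSet_Ioo
  -- Step C : RHS equals ∫_{Ioo 0 s} G (g τ)
  have stepC : (∫ τ in (0:ℝ)..s, ∫ σ in (0:ℝ)..L,
        K ((decRearr Ω w σ - decRearr Ω w τ) / h) * (decRearr Ω w σ - decRearr Ω w τ))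
      = ∫ σ in Ioo (0:ℝ) s, G (g σ) := by
    rw [intervalIntegral.integral_of_le hs0.le, integral_Ioc_eq_integral_Ioo]
    apply setIntegral_congr_fun measurableSet_Ioo
    intro τ hτ
    dsimp only
    have hτL : τ ∈ Ioo (0:ℝ) L := ⟨hτ.1, lt_trans hτ.2 hsL⟩
    have hinner : (∫ σ in (0:ℝ)..L,
        K ((decRearr Ω w σ - decRearr Ω w τ) / h) * (decRearr Ω w σ - decRearr Ω w τ))
        = G (decRearr Ω w τ) := by
      rw [intervalIntegral.integral_of_le hL0.le, integral_Ioc_eq_integral_Ioo]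
      apply setIntegral_congr_fun measurableSet_Ioo
      intro σ hσ
      dsimp only
      rw [← hg_eq σ ⟨hσ.1.le, hσ.2⟩]
    rw [hinner, hg_eq τ ⟨hτL.1.le, hτL.2⟩]
  rw [stepB, ← stepC]
end
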